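/- arXiv:2104.09881 — 5 statements merged into one kernel-verified Lean document; each statement's English description precedes it below -/
import Mathlib

section
/- Elliptic estimate: There exists a positive constant C (depending only on V, ω and μ) such that for every function u : V → ℝ, max_{x∈V} u(x) − min_{x∈V} u(x) ≤ C · max_{x∈V} |Δu(x)|. -/
open Finset Real

/-- The graph Laplacian: `Δu(x) = (1/μ x) * Σ_y ω x y * (u y - u x)`. -/
noncomputable def graphLap {V : Type*} [Fintype V] (ω : V → V → ℝ) (μ : V → ℝ)
    (u : V → ℝ) (x : V) : ℝ :=
  (1 / μ x) * ∑ y, ω x y * (u y - u x)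

/-- The integral of `f` over `V` with respect to the vertex measure `μ`. -/
noncomputable def graphInt {V : Type*} [Fintype V] (μ : V → ℝ) (f : V → ℝ) : ℝ :=
  ∑ x, f x * μ x

/-- Connectivity: any two distinct vertices are joined by a chain of positively
weighted edges. -/
def graphConn {V : Type*} (ω : V → V → ℝ) : Prop :=
  ∀ x y : V, x ≠ y → ∃ (m : ℕ) (p : ℕ → V), p 0 = x ∧ p m = y ∧
    ∀ i < m, 0 < ω (p i) (p (i + 1))

/-- The gradient form `Γ(u,v)(x)`. -/
noncomputable def graphGamma {V : Type*} [Fintype V] (ω : V → V → ℝ) (μ : V → ℝ)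
    (u v : V → ℝ) (x : V) : ℝ :=
  (1 / (2 * μ x)) * ∑ y, ω x y * (u y - u x) * (v y - v x)

/-- The length of the gradient: `|∇u|(x) = √(Γ(u,u)(x))`. -/
noncomputable def graphGradNorm {V : Type*} [Fintype V] (ω : V → V → ℝ) (μ : V → ℝ)
    (u : V → ℝ) (x : V) : ℝ :=
  Real.sqrt (graphGamma ω μ u u x)

/-- The functional `J_{h,f}(u) = ∫_V (½|∇u|² + f·u − h·e^u) dμ`. -/
noncomputable def Jfunc {V : Type*} [Fintype V] (ω : V → V → ℝ) (μ : V → ℝ)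
    (h f : V → ℝ) (u : V → ℝ) : ℝ :=
  graphInt μ (fun x => (1 / 2) * (graphGradNorm ω μ u x) ^ 2 + f x * u x - h x * Real.exp (u x))

noncomputable def ellipA (c d e : ℝ) : ℕ → ℝ
  | 0 => 0
  | k + 1 => ellipA c d e k + (c + d * ellipA c d e k) / e

lemma ellipA_nonneg {c d e : ℝ} (hc : 0 ≤ c) (hd : 0 ≤ d) (he : 0 < e) (k : ℕ) :
    0 ≤ ellipA c d e k := by
  induction k with
  | zero => simp [ellipA]
  | succ k ih =>
    have h1 : 0 ≤ (c + d * ellipA c d e k) / e :=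
      div_nonneg (add_nonneg hc (mul_nonneg hd ih)) he.le
    simp only [ellipA]; linarith

lemma ellipA_mono {c d e : ℝ} (hc : 0 ≤ c) (hd : 0 ≤ d) (he : 0 < e) :
    Monotone (ellipA c d e) := by
  apply monotone_nat_of_le_succ
  intro k
  have h0 := ellipA_nonneg hc hd he k
  have h1 : 0 ≤ (c + d * ellipA c d e k) / e :=
    div_nonneg (add_nonneg hc (mul_nonneg hd h0)) he.le
  simp only [ellipA]; linarith


/-- Elliptic estimate: there is a positive constant `C` such that for every `u`,
`max u − min u ≤ C · max |Δu|`. -/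
theorem elliptic_estimate {V : Type*} [Fintype V] [Nonempty V]
    (ω : V → V → ℝ) (μ : V → ℝ)
    (hsymm : ∀ x y, ω x y = ω y x)
    (hnonneg : ∀ x y, 0 ≤ ω x y)
    (hconn : graphConn ω)
    (hμ : ∀ x, 0 < μ x) :
    ∃ C > 0, ∀ u : V → ℝ,
      (⨆ x, u x) - (⨅ x, u x) ≤ C * ⨆ x, |graphLap ω μ u x| := by
  classical
  set c := Finset.univ.sup' Finset.univ_nonempty μ with hcdef
  have hcge : ∀ x, μ x ≤ c := fun x => Finset.le_sup' μ (Finset.mem_univ x)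
  have hc0 : 0 ≤ c := le_trans (hμ (Classical.arbitrary V)).le (hcge _)
  set d := Finset.univ.sup' Finset.univ_nonempty (fun x => ∑ y, ω x y) with hddef
  have hdge : ∀ x, (∑ y, ω x y) ≤ d := fun x => by
    exact Finset.le_sup' (fun x => ∑ y, ω x y) (Finset.mem_univ x)
  have hd0 : 0 ≤ d :=
    le_trans (Finset.sum_nonneg fun y _ => hnonneg _ y) (hdge (Classical.arbitrary V))
  set S := Finset.univ.filter (fun q : V × V => 0 < ω q.1 q.2) with hSdef
  set e := if h : S.Nonempty then S.inf' h (fun q => ω q.1 q.2) else 1 with hedef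
  have he0 : 0 < e := by
    rw [hedef]
    split
    · next h =>
      rw [Finset.lt_inf'_iff]
      intro q hq
      exact (Finset.mem_filter.mp hq).2
    · exact one_pos
  have hele : ∀ x y, 0 < ω x y → e ≤ ω x y := by
    intro x y hxy
    have hq : (x, y) ∈ S := by simp [hSdef, hxy]
    rw [hedef, dif_pos ⟨_, hq⟩]
    exact Finset.inf'_le _ hq
  have key : ∀ q : V × V, ∃ m : ℕ, q.1 ≠ q.2 → ∃ p : ℕ → V, p 0 = q.1 ∧ p m = q.2 ∧
      ∀ i < m, 0 < ω (p i) (p (i + 1)) := by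
    intro q
    by_cases h : q.1 = q.2
    · exact ⟨0, fun hne => absurd h hne⟩
    · obtain ⟨m, p, hp⟩ := hconn q.1 q.2 h
      exact ⟨m, fun _ => ⟨p, hp⟩⟩
  choose mfun hmfun using key
  set N := Finset.univ.sup mfun with hNdef
  have haN := ellipA_nonneg hc0 hd0 he0 N
  refine ⟨ellipA c d e N + 1, by linarith, ?_⟩
  intro u
  obtain ⟨x0, hx0⟩ := Finite.exists_max u
  obtain ⟨x1, hx1⟩ := Finite.exists_min u
  set M := ⨆ x, |graphLap ω μ u x| with hMdef
  have hMle : ∀ x, |graphLap ω μ u x| ≤ M := fun x => by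
    exact le_ciSup (f := fun x => |graphLap ω μ u x|) (Finite.bddAbove_range _) x
  have hM0 : 0 ≤ M := le_trans (abs_nonneg _) (hMle (Classical.arbitrary V))
  have hsup : (⨆ x, u x) = u x0 :=
    le_antisymm (ciSup_le hx0) (le_ciSup (Finite.bddAbove_range u) x0)
  have hinf : (⨅ x, u x) = u x1 :=
    le_antisymm (ciInf_le (Finite.bddBelow_range u) x1) (le_ciInf hx1)
  rw [hsup, hinf]
  have hlap : ∀ x, -(M * μ x) ≤ ∑ y, ω x y * (u y - u x) := by
    intro x
    have h1 : -M ≤ graphLap ω μ u x := neg_le_of_abs_le (hMle x)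
    have hμx := hμ x
    have h3 : graphLap ω μ u x * μ x = ∑ y, ω x y * (u y - u x) := by
      simp only [graphLap]
      field_simp
    have h4 := mul_le_mul_of_nonneg_right h1 hμx.le
    rw [h3] at h4
    linarith
  by_cases hne : x0 = x1
  · rw [hne, sub_self]
    have : 0 ≤ ellipA c d e N + 1 := by linarith
    exact mul_nonneg this hM0
  · obtain ⟨p, hp0, hpm, hpw⟩ := hmfun (x0, x1) hne
    set mm := mfun (x0, x1) with hmmdef
    have claim : ∀ k, k ≤ mm → u x0 - u (p k) ≤ ellipA c d e k * M := by
      intro k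
      induction k with
      | zero => intro _; simp [ellipA, hp0]
      | succ k ih =>
        intro hk
        have hkm : k ≤ mm := by omega
        have hD := ih hkm
        set x := p k with hxdef
        set z := p (k + 1) with hzdef
        have hw : 0 < ω x z := hpw k (by omega)
        have hD0 : 0 ≤ u x0 - u x := sub_nonneg.mpr (hx0 x)
        have hak := ellipA_nonneg hc0 hd0 he0 k
        have hsum : ∑ y, ω x y * (u y - u x) ≤ ω x z * (u z - u x) + d * (u x0 - u x) := by
          have hsplit : ω x z * (u z - u x) + ∑ y ∈ Finset.univ.erase z, ω x y * (u y - u x)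
              = ∑ y, ω x y * (u y - u x) := by
            exact Finset.add_sum_erase _ (fun y => ω x y * (u y - u x)) (Finset.mem_univ z)
          rw [← hsplit]
          have t1 : ∑ y ∈ Finset.univ.erase z, ω x y * (u y - u x)
              ≤ ∑ y ∈ Finset.univ.erase z, ω x y * (u x0 - u x) :=
            Finset.sum_le_sum fun y _ =>
              mul_le_mul_of_nonneg_left (by have := hx0 y; linarith) (hnonneg x y)
          have t2 : ∑ y ∈ Finset.univ.erase z, ω x y * (u x0 - u x)
              ≤ ∑ y, ω x y * (u x0 - u x) :=
            Finset.sum_le_sum_of_subset_of_nonneg (Finset.erase_subset _ _)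
              (fun y _ _ => mul_nonneg (hnonneg x y) hD0)
          have t3 : ∑ y, ω x y * (u x0 - u x) = (∑ y, ω x y) * (u x0 - u x) :=
            (Finset.sum_mul _ _ _).symm
          have t4 : (∑ y, ω x y) * (u x0 - u x) ≤ d * (u x0 - u x) :=
            mul_le_mul_of_nonneg_right (hdge x) hD0
          rw [t3] at t2
          linarith
        have h5 : ω x z * (u x - u z) ≤ M * c + d * (ellipA c d e k * M) := by
          have hl := hlap x
          have hμc : M * μ x ≤ M * c := mul_le_mul_of_nonneg_left (hcge x) hM0
          have hdd : d * (u x0 - u x) ≤ d * (ellipA c d e k * M) :=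
            mul_le_mul_of_nonneg_left hD hd0
          have hrw : ω x z * (u x - u z) = -(ω x z * (u z - u x)) := by ring
          rw [hrw]
          linarith
        have num0 : 0 ≤ M * c + d * (ellipA c d e k * M) :=
          add_nonneg (mul_nonneg hM0 hc0) (mul_nonneg hd0 (mul_nonneg hak hM0))
        have h6 : u x - u z ≤ (M * c + d * (ellipA c d e k * M)) / e := by
          rcases le_or_gt (u x - u z) 0 with h | h
          · exact le_trans h (div_nonneg num0 he0.le)
          · have hwz := hele x z hw
            have h7 : u x - u z ≤ (M * c + d * (ellipA c d e k * M)) / ω x z := by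
              rw [le_div_iff₀ hw, mul_comm]
              exact h5
            have h8 : (M * c + d * (ellipA c d e k * M)) / ω x z
                ≤ (M * c + d * (ellipA c d e k * M)) / e := by
              gcongr
            linarith
        have heq : (M * c + d * (ellipA c d e k * M)) / e
            = (c + d * ellipA c d e k) / e * M := by
          field_simp
        simp only [ellipA]
        rw [heq] at h6
        have : u x0 - u z = (u x0 - u x) + (u x - u z) := by ring
        rw [this]
        have : (ellipA c d e k + (c + d * ellipA c d e k) / e) * M
            = ellipA c d e k * M + (c + d * ellipA c d e k) / e * M := by ring
        rw [this]
        exact add_le_add hD h6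
    have hfinal := claim mm le_rfl
    rw [hpm] at hfinal
    have hmN : mm ≤ N := Finset.le_sup (Finset.mem_univ (x0, x1))
    have := ellipA_mono hc0 hd0 he0 hmN
    have h9 : ellipA c d e mm * M ≤ ellipA c d e N * M :=
      mul_le_mul_of_nonneg_right this hM0
    nlinarith
end

section
/- Kato's inequality: For every function u : V → ℝ and every vertex x ∈ V, the positive part u⁺ = max(u, 0) satisfies Δu⁺(x) ≥ Δu(x) if u(x) > 0, and Δu⁺(x) ≥ 0 if u(x) ≤ 0 (that is, Δu⁺ ≥ χ_{{u>0}}·Δu pointwise). -/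
open Finset Real

/-- Kato's inequality: `Δu⁺ ≥ χ_{u>0}·Δu` pointwise, i.e. `Δu⁺(x) ≥ Δu(x)` if
`u(x) > 0` and `Δu⁺(x) ≥ 0` if `u(x) ≤ 0`. -/
theorem kato_inequality {V : Type*} [Fintype V] [Nonempty V]
    (ω : V → V → ℝ) (μ : V → ℝ)
    (hsymm : ∀ x y, ω x y = ω y x)
    (hnonneg : ∀ x y, 0 ≤ ω x y)
    (hconn : graphConn ω)
    (hμ : ∀ x, 0 < μ x)
    (u : V → ℝ) (x : V) :
    (0 < u x → graphLap ω μ u x ≤ graphLap ω μ (fun y => max (u y) 0) x) ∧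
    (u x ≤ 0 → 0 ≤ graphLap ω μ (fun y => max (u y) 0) x) := by
  have hμx : 0 ≤ 1 / μ x := le_of_lt (by have := hμ x; positivity)
  constructor
  · intro hx
    unfold graphLap
    apply mul_le_mul_of_nonneg_left _ hμx
    apply Finset.sum_le_sum
    intro y _
    have : max (u x) 0 = u x := max_eq_left hx.le
    simp only
    rw [this]
    have := le_max_left (u y) 0
    nlinarith [hnonneg x y]
  · intro hx
    unfold graphLap
    apply mul_nonneg hμx
    apply Finset.sum_nonneg
    intro y _
    have : max (u x) 0 = 0 := max_eq_right hx
    simp only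
    rw [this]
    have := le_max_right (u y) 0
    nlinarith [hnonneg x y]
end

section
/- Sub- and super-solutions principle: Let f : V × ℝ → ℝ be continuous and F : V × ℝ → ℝ satisfy ∂F/∂t(x,t) = f(x,t) for all (x,t), and define J(u) = ∫_V (½|∇u|² − F(x, u(x))) dμ. Suppose φ is a sub-solution (Δφ(x) + f(x, φ(x)) ≥ 0 for all x ∈ V) and ψ is a super-solution (Δψ(x) + f(x, ψ(x)) ≤ 0 for all x ∈ V) with φ(x) ≤ ψ(x) for all x ∈ V. Then every minimizer u of J over the set {v : V → ℝ : φ(x) ≤ v(x) ≤ ψ(x) for all x} satisfies −Δu(x) = f(x, u(x)) for all x ∈ V. -/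
open Finset Real

/-!
Perturb a constrained minimizer `u` at a single vertex: `t ↦ J(u + t δ_{x₀})` has derivative
`-(Δu(x₀) + f(x₀, u(x₀))) μ(x₀)` at `0`, by the discrete Green formula. If `u(x₀) < ψ(x₀)`, small
`t > 0` keep the perturbation admissible, so this derivative is `≥ 0`; if `u(x₀) = ψ(x₀)`, then
`u ≤ ψ` touches `ψ` at `x₀`, so `Δu(x₀) ≤ Δψ(x₀)` and the super-solution inequality gives the same
bound `Δu(x₀) + f(x₀, u(x₀)) ≤ 0`. The sub-solution `φ` yields the reverse inequality.
-/

section GraphCalculus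

variable {V : Type*} [Fintype V] {ω : V → V → ℝ} {μ : V → ℝ}

theorem graphGamma_self_nonneg (hω : ∀ x y, 0 ≤ ω x y) {x : V} (hμ : 0 ≤ μ x) (u : V → ℝ) :
    0 ≤ graphGamma ω μ u u x := by
  unfold graphGamma
  refine mul_nonneg (by positivity) (Finset.sum_nonneg fun y _ => ?_)
  rw [mul_assoc]
  exact mul_nonneg (hω x y) (mul_self_nonneg _)

theorem graphGradNorm_sq (hω : ∀ x y, 0 ≤ ω x y) {x : V} (hμ : 0 ≤ μ x) (u : V → ℝ) :
    graphGradNorm ω μ u x ^ 2 = graphGamma ω μ u u x :=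
  Real.sq_sqrt (graphGamma_self_nonneg hω hμ u)

theorem graphGamma_add_smul (u v : V → ℝ) (t : ℝ) (x : V) :
    graphGamma ω μ (u + t • v) (u + t • v) x =
      graphGamma ω μ u u x + 2 * t * graphGamma ω μ u v x + t ^ 2 * graphGamma ω μ v v x := by
  simp only [graphGamma, Pi.add_apply, Pi.smul_apply, smul_eq_mul, Finset.mul_sum,
    ← Finset.sum_add_distrib]
  exact Finset.sum_congr rfl fun y _ => by ring

theorem graphInt_graphGamma (hsymm : ∀ x y, ω x y = ω y x) (hμ : ∀ x, μ x ≠ 0)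
    (u v : V → ℝ) :
    graphInt μ (graphGamma ω μ u v) = -graphInt μ (fun x => v x * graphLap ω μ u x) := by
  have hswap : ∑ x, ∑ y, ω x y * (u y - u x) * v y = -∑ x, ∑ y, ω x y * (u y - u x) * v x := by
    rw [Finset.sum_comm, ← Finset.sum_neg_distrib]
    refine Finset.sum_congr rfl fun x _ => ?_
    rw [← Finset.sum_neg_distrib]
    exact Finset.sum_congr rfl fun y _ => by rw [hsymm]; ring
  have hlhs : graphInt μ (graphGamma ω μ u v) =
      (∑ x, ∑ y, ω x y * (u y - u x) * v y - ∑ x, ∑ y, ω x y * (u y - u x) * v x) / 2 := by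
    simp only [graphInt, graphGamma, ← Finset.sum_sub_distrib, Finset.sum_div]
    refine Finset.sum_congr rfl fun x _ => ?_
    rw [Finset.mul_sum, Finset.sum_mul]
    refine Finset.sum_congr rfl fun y _ => ?_
    field_simp [hμ x]
  have hrhs : graphInt μ (fun x => v x * graphLap ω μ u x) =
      ∑ x, ∑ y, ω x y * (u y - u x) * v x := by
    simp only [graphInt, graphLap]
    refine Finset.sum_congr rfl fun x _ => ?_
    rw [Finset.mul_sum, Finset.mul_sum, Finset.sum_mul]
    refine Finset.sum_congr rfl fun y _ => ?_
    field_simp [hμ x]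
  rw [hlhs, hrhs, hswap]
  ring

theorem graphInt_single_mul [DecidableEq V] (x₀ : V) (g : V → ℝ) :
    graphInt μ (fun x => (Pi.single x₀ 1 : V → ℝ) x * g x) = g x₀ * μ x₀ := by
  simp [graphInt, Pi.single_apply]

noncomputable def graphEnergy (ω : V → V → ℝ) (μ : V → ℝ) (F : V → ℝ → ℝ) (v : V → ℝ) : ℝ :=
  graphInt μ (fun x => (1 / 2) * (graphGradNorm ω μ v x) ^ 2 - F x (v x))

theorem hasDerivAt_graphEnergy_add_smul (hsymm : ∀ x y, ω x y = ω y x)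
    (hω : ∀ x y, 0 ≤ ω x y) (hμ : ∀ x, 0 < μ x) {f F : V → ℝ → ℝ}
    (hF : ∀ x t, HasDerivAt (F x) (f x t) t) (u v : V → ℝ) :
    HasDerivAt (fun t : ℝ => graphEnergy ω μ F (u + t • v))
      (-graphInt μ (fun x => v x * (graphLap ω μ u x + f x (u x)))) 0 := by
  have hterm : ∀ x, HasDerivAt
      (fun t : ℝ => ((1 / 2) * (graphGradNorm ω μ (u + t • v) x) ^ 2 - F x ((u + t • v) x)) * μ x)
      ((graphGamma ω μ u v x - f x (u x) * v x) * μ x) 0 := by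
    intro x
    simp only [graphGradNorm_sq hω (hμ x).le, graphGamma_add_smul, Pi.add_apply, Pi.smul_apply,
      smul_eq_mul]
    have hline : HasDerivAt (fun t : ℝ => u x + t * v x) (v x) 0 := by
      simpa using ((hasDerivAt_id (0 : ℝ)).mul_const (v x)).const_add (u x)
    have hF' : HasDerivAt (fun t : ℝ => F x (u x + t * v x)) (f x (u x) * v x) 0 :=
      (hF x (u x)).comp_of_eq 0 hline (by simp)
    have hquad : HasDerivAt (fun t : ℝ => graphGamma ω μ u u x + 2 * t * graphGamma ω μ u v x
        + t ^ 2 * graphGamma ω μ v v x) (2 * graphGamma ω μ u v x) 0 :=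
      ((((hasDerivAt_id (0 : ℝ)).const_mul 2).mul_const (graphGamma ω μ u v x)
        |>.const_add (graphGamma ω μ u u x)).add
          ((hasDerivAt_pow 2 (0 : ℝ)).mul_const (graphGamma ω μ v v x))).congr_deriv (by simp)
    exact (((hquad.const_mul (1 / 2)).sub hF').mul_const (μ x)).congr_deriv (by ring)
  refine (HasDerivAt.fun_sum (u := Finset.univ) fun x _ => hterm x).congr_deriv ?_
  have hgreen := graphInt_graphGamma hsymm (fun x => (hμ x).ne') u v
  simp only [graphInt] at hgreen ⊢
  simp only [sub_mul, mul_add, add_mul, Finset.sum_sub_distrib, Finset.sum_add_distrib, hgreen,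
    mul_comm (f _ _) (v _)]
  ring

theorem graphLap_le_of_le_of_eq (hω : ∀ x y, 0 ≤ ω x y) {u v : V → ℝ} {x : V} (hμ : 0 ≤ μ x)
    (hle : u ≤ v) (heq : u x = v x) : graphLap ω μ u x ≤ graphLap ω μ v x := by
  unfold graphLap
  gcongr with y
  · exact hω x y
  · exact hle y
  · exact heq.ge

end GraphCalculus

theorem HasDerivAt.nonneg_of_isLocalMinOn {g : ℝ → ℝ} {c t₀ b : ℝ} {s : Set ℝ}
    (hg : HasDerivAt g c t₀) (hmin : IsLocalMinOn g s t₀) (hb : t₀ < b)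
    (hs : Set.Icc t₀ b ⊆ s) : 0 ≤ c := by
  have hcone : b - t₀ ∈ posTangentConeAt s t₀ :=
    sub_mem_posTangentConeAt_of_segment_subset ((segment_eq_Icc hb.le).subset.trans hs)
  have h : 0 ≤ (b - t₀) * c :=
    hmin.hasFDerivWithinAt_nonneg hg.hasFDerivAt.hasFDerivWithinAt hcone
  exact nonneg_of_mul_nonneg_right h (sub_pos.2 hb)

theorem HasDerivAt.nonpos_of_isLocalMinOn {g : ℝ → ℝ} {c a t₀ : ℝ} {s : Set ℝ}
    (hg : HasDerivAt g c t₀) (hmin : IsLocalMinOn g s t₀) (ha : a < t₀)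
    (hs : Set.Icc a t₀ ⊆ s) : c ≤ 0 := by
  have hcone : a - t₀ ∈ posTangentConeAt s t₀ :=
    sub_mem_posTangentConeAt_of_segment_subset
      ((segment_symm ℝ t₀ a ▸ segment_eq_Icc ha.le).subset.trans hs)
  have h : 0 ≤ (a - t₀) * c :=
    hmin.hasFDerivWithinAt_nonneg hg.hasFDerivAt.hasFDerivWithinAt hcone
  exact nonpos_of_mul_nonneg_right h (sub_neg.2 ha)

theorem le_add_smul_single_le {V : Type*} [DecidableEq V] {φ ψ u : V → ℝ}
    (hu : ∀ x, φ x ≤ u x ∧ u x ≤ ψ x) {x₀ : V} {t : ℝ}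
    (ht : t ∈ Set.Icc (φ x₀ - u x₀) (ψ x₀ - u x₀)) :
    ∀ x, φ x ≤ (u + t • (Pi.single x₀ 1 : V → ℝ)) x ∧
      (u + t • (Pi.single x₀ 1 : V → ℝ)) x ≤ ψ x := by
  intro x
  rcases eq_or_ne x x₀ with rfl | hx
  · simp only [Pi.add_apply, Pi.smul_apply, Pi.single_eq_same, smul_eq_mul, mul_one]
    constructor <;> linarith [ht.1, ht.2]
  · simpa [Pi.single_eq_of_ne hx] using hu x

theorem sub_super_solutions_principle_general {V : Type*} [Fintype V]
    (ω : V → V → ℝ) (μ : V → ℝ)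
    (hsymm : ∀ x y, ω x y = ω y x)
    (hnonneg : ∀ x y, 0 ≤ ω x y)
    (hμ : ∀ x, 0 < μ x)
    (f F : V → ℝ → ℝ)
    (hF : ∀ x t, HasDerivAt (F x) (f x t) t)
    (J : (V → ℝ) → ℝ)
    (hJ : ∀ v, J v =
      graphInt μ (fun x => (1 / 2) * (graphGradNorm ω μ v x) ^ 2 - F x (v x)))
    (φ ψ : V → ℝ)
    (hsub : ∀ x, 0 ≤ graphLap ω μ φ x + f x (φ x))
    (hsuper : ∀ x, graphLap ω μ ψ x + f x (ψ x) ≤ 0)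
    (u : V → ℝ)
    (hu_mem : ∀ x, φ x ≤ u x ∧ u x ≤ ψ x)
    (hu_min : ∀ v : V → ℝ, (∀ x, φ x ≤ v x ∧ v x ≤ ψ x) → J u ≤ J v) :
    ∀ x, -graphLap ω μ u x = f x (u x) := by
  classical
  intro x₀
  obtain rfl : J = graphEnergy ω μ F := funext hJ
  set e : V → ℝ := Pi.single x₀ 1
  have hderiv : HasDerivAt (fun t : ℝ => graphEnergy ω μ F (u + t • e))
      (-((graphLap ω μ u x₀ + f x₀ (u x₀)) * μ x₀)) 0 := by
    simpa only [e, graphInt_single_mul] using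
      hasDerivAt_graphEnergy_add_smul hsymm hnonneg hμ hF u e
  have hmin : IsLocalMinOn (fun t : ℝ => graphEnergy ω μ F (u + t • e))
      (Set.Icc (φ x₀ - u x₀) (ψ x₀ - u x₀)) 0 :=
    IsMinOn.localize fun t ht => by simpa using hu_min _ (le_add_smul_single_le hu_mem ht)
  have hupper : graphLap ω μ u x₀ + f x₀ (u x₀) ≤ 0 := by
    rcases (hu_mem x₀).2.eq_or_lt with htouch | hlt
    · have := graphLap_le_of_le_of_eq hnonneg (hμ x₀).le (fun x => (hu_mem x).2) htouch
      rw [htouch]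
      linarith [hsuper x₀]
    · have h := hderiv.nonneg_of_isLocalMinOn hmin (sub_pos.2 hlt)
        (Set.Icc_subset_Icc_left (by linarith [(hu_mem x₀).1]))
      exact nonpos_of_mul_nonpos_left (neg_nonneg.1 h) (hμ x₀)
  have hlower : 0 ≤ graphLap ω μ u x₀ + f x₀ (u x₀) := by
    rcases (hu_mem x₀).1.eq_or_lt with htouch | hlt
    · have := graphLap_le_of_le_of_eq hnonneg (hμ x₀).le (fun x => (hu_mem x).1) htouch
      rw [← htouch]
      linarith [hsub x₀]
    · have h := hderiv.nonpos_of_isLocalMinOn hmin (sub_neg.2 hlt)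
        (Set.Icc_subset_Icc_right (by linarith [(hu_mem x₀).2]))
      exact nonneg_of_mul_nonneg_left (neg_nonpos.1 h) (hμ x₀)
  linarith

/-- Sub- and super-solutions principle: if `φ` is a sub-solution and `ψ` a
super-solution of `−Δu = f(x,u)` with `φ ≤ ψ`, then every minimizer of
`J(u) = ∫_V (½|∇u|² − F(x,u)) dμ` over `{v : φ ≤ v ≤ ψ}` solves the equation. -/
theorem sub_super_solutions_principle {V : Type*} [Fintype V] [Nonempty V]
    (ω : V → V → ℝ) (μ : V → ℝ)
    (hsymm : ∀ x y, ω x y = ω y x)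
    (hnonneg : ∀ x y, 0 ≤ ω x y)
    (hconn : graphConn ω)
    (hμ : ∀ x, 0 < μ x)
    (f F : V → ℝ → ℝ)
    (hf_cont : ∀ x, Continuous (f x))
    (hF : ∀ x t, HasDerivAt (F x) (f x t) t)
    (J : (V → ℝ) → ℝ)
    (hJ : ∀ v, J v =
      graphInt μ (fun x => (1 / 2) * (graphGradNorm ω μ v x) ^ 2 - F x (v x)))
    (φ ψ : V → ℝ)
    (hsub : ∀ x, 0 ≤ graphLap ω μ φ x + f x (φ x))
    (hsuper : ∀ x, graphLap ω μ ψ x + f x (ψ x) ≤ 0)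
    (hle : ∀ x, φ x ≤ ψ x)
    (u : V → ℝ)
    (hu_mem : ∀ x, φ x ≤ u x ∧ u x ≤ ψ x)
    (hu_min : ∀ v : V → ℝ, (∀ x, φ x ≤ v x ∧ v x ≤ ψ x) → J u ≤ J v) :
    ∀ x, -graphLap ω μ u x = f x (u x) :=
  sub_super_solutions_principle_general ω μ hsymm hnonneg hμ f F hF J hJ φ ψ hsub hsuper u hu_mem
    hu_min
end

section
/- A priori estimate for the Kazdan–Warner equation: Let h : V → ℝ and c ∈ ℝ satisfy: (1) if c > 0 then h is positive somewhere; (2) if c = 0 then h changes sign (is positive somewhere and negative somewhere) and ∫_V h dμ < 0; (3) if c < 0 then h is negative somewhere. Then there exists a constant C > 0 (depending only on h, c, V, ω and μ) such that every solution u : V → ℝ of −Δu(x) = h(x)e^{u(x)} − c for all x ∈ V satisfies max_{x∈V} |u(x)| ≤ C. -/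
/-!
Multiplied by `μ`, the equation reads `∑_y ω(x,y) (u y - u x) = μ x (c - h x e^{u x})`; summing
over `x` gives the balance `∫ h e^u dμ = c ∫ 1 dμ`. If the left side is bounded below by `-q`,
following a chain of positive edges away from a maximum point of `u` shows `max u - u y ≤ K q`
with `K` depending only on the graph (a discrete Harnack inequality). This, together with the
balance and the sign conditions on `h` and `c`, bounds `max u` above and below, and then bounds
`u` below everywhere.
-/

open Finset Real

section Laplacian

variable {V : Type*} [Fintype V]

/-- The unnormalised Laplacian `μ x * Δu(x)`. -/
def combLap (ω : V → V → ℝ) (u : V → ℝ) (x : V) : ℝ :=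
  ∑ y, ω x y * (u y - u x)

/-- The equation `-Δu = h e^u - c`, multiplied by `μ`. -/
def IsKazdanWarnerSolution (ω : V → V → ℝ) (μ h : V → ℝ) (c : ℝ) (u : V → ℝ) : Prop :=
  ∀ x, combLap ω u x = μ x * (c - h x * exp (u x))

variable {ω : V → V → ℝ} {μ h u : V → ℝ} {c : ℝ}

theorem isKazdanWarnerSolution_of_graphLap (hμ : ∀ x, 0 < μ x)
    (hu : ∀ x, -graphLap ω μ u x = h x * exp (u x) - c) :
    IsKazdanWarnerSolution ω μ h c u := by
  intro x
  have hx := hu x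
  rw [graphLap, one_div, ← combLap] at hx
  field_simp [(hμ x).ne'] at hx ⊢
  linarith

theorem sum_combLap_eq_zero (hsymm : ∀ x y, ω x y = ω y x) (u : V → ℝ) :
    ∑ x, combLap ω u x = 0 := by
  have hswap : ∑ x, ∑ y, ω x y * u y = ∑ x, ∑ y, ω x y * u x := by
    rw [sum_comm]
    simp only [hsymm]
  simp only [combLap, mul_sub, sum_sub_distrib, hswap, sub_self]

theorem IsKazdanWarnerSolution.sum_mul_exp (hu : IsKazdanWarnerSolution ω μ h c u)
    (hsymm : ∀ x y, ω x y = ω y x) :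
    ∑ x, h x * μ x * exp (u x) = c * ∑ x, μ x := by
  have h0 : ∑ x, μ x * (c - h x * exp (u x)) = 0 :=
    (sum_congr rfl fun x _ => (hu x).symm).trans (sum_combLap_eq_zero hsymm u)
  have hsplit : ∑ x, μ x * (c - h x * exp (u x)) =
      c * ∑ x, μ x - ∑ x, h x * μ x * exp (u x) := by
    rw [mul_sum, ← sum_sub_distrib]
    exact sum_congr rfl fun x _ => by ring
  linarith

theorem combLap_nonneg_of_forall_le {x : V} (hω : ∀ y, 0 ≤ ω x y) (hx : ∀ y, u x ≤ u y) :
    0 ≤ combLap ω u x :=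
  sum_nonneg fun y _ => mul_nonneg (hω y) (sub_nonneg.2 (hx y))

theorem combLap_le_of_forall_le {x : V} {s : ℝ} (hω : ∀ y, 0 ≤ ω x y) (hs : ∀ y, u y ≤ s)
    (y : V) : combLap ω u x ≤ ω x y * (u y - s) + (∑ z, ω x z) * (s - u x) := by
  classical
  have hsplit : combLap ω u x = ∑ z, ω x z * (u z - s) + (∑ z, ω x z) * (s - u x) := by
    simp only [combLap, sum_mul, ← sum_add_distrib]
    exact sum_congr rfl fun z _ => by ring
  have hrest : ∑ z ∈ univ.erase y, ω x z * (u z - s) ≤ 0 :=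
    sum_nonpos fun z _ => mul_nonpos_of_nonneg_of_nonpos (hω z) (sub_nonpos.2 (hs z))
  rw [hsplit, ← add_sum_erase _ _ (mem_univ y)]
  linarith

theorem combLap_le_mul_of_forall_le {x : V} {s : ℝ} (hω : ∀ y, 0 ≤ ω x y)
    (hs : ∀ y, u y ≤ s) : combLap ω u x ≤ (∑ z, ω x z) * (s - u x) := by
  have := combLap_le_of_forall_le hω hs x
  nlinarith [hω x, hs x]

end Laplacian

section Chains

variable {V : Type*} [Fintype V] {ω : V → V → ℝ} {u : V → ℝ} {s q w W : ℝ}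

/-- Shifting the gap `s - u` by `q` makes the one-edge estimate multiplicative, so that it
iterates along a chain. -/
theorem sub_add_le_of_combLap_ge {x y : V} (hω : ∀ z, 0 ≤ ω x z) (hs : ∀ z, u z ≤ s)
    (hq : 0 ≤ q) (hw : 0 < w) (hwxy : w ≤ ω x y) (hW : ∑ z, ω x z ≤ W)
    (hlap : -q ≤ combLap ω u x) :
    s - u y + q ≤ (1 + (W + 1) / w) * (s - u x + q) := by
  have hedge := combLap_le_of_forall_le hω hs y
  have hrow : ω x y ≤ ∑ z, ω x z :=
    single_le_sum (fun z _ => hω z) (mem_univ y)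
  have hy := hs y
  have hx := hs x
  have hstep : s - u y ≤ (W + 1) * (s - u x + q) / w := by
    rw [le_div_iff₀ hw]
    nlinarith [mul_le_mul_of_nonneg_right hwxy (sub_nonneg.2 hy),
      mul_le_mul_of_nonneg_right hW (sub_nonneg.2 hx)]
  have hexpand : (1 + (W + 1) / w) * (s - u x + q) =
      s - u x + q + (W + 1) * (s - u x + q) / w := by
    ring
  rw [hexpand]
  linarith

theorem sub_add_le_pow_of_chain (hnonneg : ∀ x y, 0 ≤ ω x y) (hs : ∀ z, u z ≤ s) (hq : 0 ≤ q)
    (hw : 0 < w) (hW : ∀ x, ∑ z, ω x z ≤ W) (p : ℕ → V) (n : ℕ)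
    (hedge : ∀ i < n, w ≤ ω (p i) (p (i + 1)))
    (hlap : ∀ i < n, -q ≤ combLap ω u (p i)) :
    s - u (p n) + q ≤ (1 + (W + 1) / w) ^ n * (s - u (p 0) + q) := by
  induction n with
  | zero => simp
  | succ n ih =>
    have hstep := sub_add_le_of_combLap_ge (hnonneg (p n)) hs hq hw (hedge n n.lt_succ_self)
      (hW (p n)) (hlap n n.lt_succ_self)
    have ih := ih (fun i hi => hedge i (by omega)) (fun i hi => hlap i (by omega))
    have hR : 0 ≤ 1 + (W + 1) / w := by
      have := (sum_nonneg fun z _ => hnonneg (p 0) z).trans (hW (p 0))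
      positivity
    calc s - u (p (n + 1)) + q ≤ (1 + (W + 1) / w) * (s - u (p n) + q) := hstep
      _ ≤ (1 + (W + 1) / w) * ((1 + (W + 1) / w) ^ n * (s - u (p 0) + q)) :=
        mul_le_mul_of_nonneg_left ih hR
      _ = (1 + (W + 1) / w) ^ (n + 1) * (s - u (p 0) + q) := by ring

theorem exists_pos_le_of_pos {α : Type*} [Finite α] (f : α → ℝ) :
    ∃ w > 0, ∀ a, 0 < f a → w ≤ f a := by
  rcases isEmpty_or_nonempty α with hα | hα
  · exact ⟨1, one_pos, fun a => isEmptyElim a⟩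
  let g a := if 0 < f a then f a else 1
  obtain ⟨a₀, ha₀⟩ := Finite.exists_min g
  refine ⟨g a₀, ?_, fun a ha => (ha₀ a).trans_eq (if_pos ha)⟩
  by_cases h : 0 < f a₀ <;> simp [g, h]

theorem graphConn.exists_bounded_chains (hconn : graphConn ω) :
    ∃ M : ℕ, ∀ x y : V, ∃ n ≤ M, ∃ p : ℕ → V,
      p 0 = x ∧ p n = y ∧ ∀ i < n, 0 < ω (p i) (p (i + 1)) := by
  classical
  choose! len p hp0 hplen hpos using hconn
  refine ⟨univ.sup fun xy : V × V => len xy.1 xy.2, fun x y => ?_⟩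
  by_cases hxy : x = y
  · exact ⟨0, Nat.zero_le _, fun _ => x, rfl, hxy, fun i hi => absurd hi (Nat.not_lt_zero i)⟩
  · exact ⟨len x y, le_sup (f := fun xy : V × V => len xy.1 xy.2) (mem_univ (x, y)),
      p x y, hp0 x y hxy, hplen x y hxy, hpos x y hxy⟩

def IsHarnackConst (ω : V → V → ℝ) (K : ℝ) : Prop :=
  ∀ (P : V → Prop) (u : V → ℝ) (s q : ℝ) (x b : V), (∀ z, u z ≤ s) → 0 ≤ q → P b →
    (∀ z, ¬ P z → -q ≤ combLap ω u z) → ∃ y, P y ∧ s - u y + q ≤ K * (s - u x + q)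

theorem exists_isHarnackConst (hnonneg : ∀ x y, 0 ≤ ω x y) (hconn : graphConn ω) :
    ∃ K, IsHarnackConst ω K := by
  classical
  obtain ⟨w, hw, hwle⟩ := exists_pos_le_of_pos fun xy : V × V => ω xy.1 xy.2
  obtain ⟨M, hM⟩ := hconn.exists_bounded_chains
  set W := ∑ x, ∑ y, ω x y
  have hW : ∀ x, ∑ z, ω x z ≤ W := fun x =>
    single_le_sum (f := fun x => ∑ y, ω x y)
      (fun x _ => sum_nonneg fun y _ => hnonneg x y) (mem_univ x)
  have hW0 : 0 ≤ W := sum_nonneg fun x _ => sum_nonneg fun y _ => hnonneg x y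
  have hR : 1 ≤ 1 + (W + 1) / w := le_add_of_nonneg_right (by positivity)
  refine ⟨(1 + (W + 1) / w) ^ M, fun P u s q x b hs hq hb hlap => ?_⟩
  obtain ⟨n, hnM, p, hp0, hpn, hpos⟩ := hM x b
  have hex : ∃ k, P (p k) := ⟨n, hpn ▸ hb⟩
  set k := Nat.find hex
  have hkn : k ≤ n := Nat.find_min' hex (hpn ▸ hb)
  refine ⟨p k, Nat.find_spec hex, ?_⟩
  have hchain := sub_add_le_pow_of_chain hnonneg hs hq hw hW p k
    (fun i hi => hwle (p i, p (i + 1)) (hpos i (by omega)))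
    (fun i hi => hlap (p i) (Nat.find_min hex hi))
  rw [hp0] at hchain
  exact hchain.trans (mul_le_mul_of_nonneg_right (pow_le_pow_right₀ hR (hkn.trans hnM))
    (by linarith [hs x]))

theorem IsHarnackConst.sub_le {K : ℝ} (hK : IsHarnackConst ω K) {x : V}
    (hx : ∀ z, u z ≤ u x) (hq : 0 ≤ q) (hlap : ∀ z, -q ≤ combLap ω u z) (y : V) :
    u x - u y ≤ K * q := by
  obtain ⟨y', rfl, hy⟩ := hK (· = y) u (u x) q x y hx hq rfl fun z _ => hlap z
  linarith

theorem IsHarnackConst.one_le [Nonempty V] {K : ℝ} (hK : IsHarnackConst ω K) : 1 ≤ K := by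
  let x : V := Classical.arbitrary V
  obtain ⟨_, -, hy⟩ := hK (· = x) 0 0 1 x x (fun _ => le_rfl) zero_le_one rfl
    fun z _ => by simp [combLap]
  simpa using hy

end Chains

theorem exists_forall_le_of_mul_exp_le {α β γ : ℝ} (hα : 0 < α) (hβ : 0 ≤ β) :
    ∃ S, ∀ s, α * exp s ≤ β + γ * max s 0 → s ≤ S := by
  refine ⟨max 1 (2 * (β + γ) / α), fun s hs => ?_⟩
  by_contra! hS
  have h1 : 1 < s := (le_max_left _ _).trans_lt hS
  have h2 : 2 * (β + γ) < s * α := (div_lt_iff₀ hα).1 ((le_max_right _ _).trans_lt hS)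
  have hquad : s ^ 2 / 2 ≤ exp s := by
    nlinarith [quadratic_le_exp_of_nonneg (zero_le_one.trans h1.le)]
  rw [max_eq_left (by linarith)] at hs
  nlinarith [mul_le_mul_of_nonneg_left hquad hα.le]

theorem log_div_le_of_le_mul_exp {a b s : ℝ} (ha : 0 < a) (h : a ≤ b * exp s) :
    log (a / b) ≤ s := by
  have hb : 0 < b := pos_of_mul_pos_left (ha.trans_le h) (exp_pos s).le
  rw [log_le_iff_le_exp (div_pos ha hb), div_le_iff₀ hb, mul_comm]
  exact h

theorem exp_sub_exp_le_mul {s t P : ℝ} (h : s - P ≤ t) : exp s - exp t ≤ P * exp s := by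
  have hlow : exp s * (1 - P) ≤ exp t := by
    calc exp s * (1 - P) ≤ exp s * exp (-P) :=
          mul_le_mul_of_nonneg_left (by linarith [add_one_le_exp (-P)]) (exp_pos s).le
      _ = exp (s - P) := by rw [← exp_add, sub_eq_add_neg]
      _ ≤ exp t := exp_le_exp.2 h
  linarith

namespace IsKazdanWarnerSolution

variable {V : Type*} [Fintype V] {ω : V → V → ℝ} {μ h u : V → ℝ} {c H s : ℝ}

theorem neg_le_combLap (hu : IsKazdanWarnerSolution ω μ h c u) (hμ : ∀ x, 0 < μ x)
    (hH : ∀ x, |h x| ≤ H) (hs : ∀ x, u x ≤ s) (z : V) :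
    -((∑ x, μ x) * (|c| + H * exp s)) ≤ combLap ω u z := by
  have hVol : μ z ≤ ∑ x, μ x := single_le_sum (fun x _ => (hμ x).le) (mem_univ z)
  have hhexp : h z * exp (u z) ≤ H * exp s :=
    mul_le_mul ((le_abs_self _).trans (hH z)) (exp_le_exp.2 (hs z)) (exp_pos _).le
      ((abs_nonneg _).trans (hH z))
  have hbound : 0 ≤ |c| + H * exp s :=
    add_nonneg (abs_nonneg c) (mul_nonneg ((abs_nonneg _).trans (hH z)) (exp_pos s).le)
  rw [hu z]
  nlinarith [neg_abs_le c, hμ z]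

theorem sub_le_of_forall_le (hu : IsKazdanWarnerSolution ω μ h c u) (hμ : ∀ x, 0 < μ x)
    {K : ℝ} (hK : IsHarnackConst ω K) (hH : ∀ x, |h x| ≤ H) {x₀ : V} (hx₀ : ∀ z, u z ≤ u x₀)
    (y : V) : u x₀ - u y ≤ K * ((∑ x, μ x) * (|c| + H * exp (u x₀))) := by
  refine hK.sub_le hx₀ ?_ (hu.neg_le_combLap hμ hH hx₀) y
  exact mul_nonneg (sum_nonneg fun x _ => (hμ x).le)
    (add_nonneg (abs_nonneg c) (mul_nonneg ((abs_nonneg _).trans (hH y)) (exp_pos _).le))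

theorem neg_le_mul_exp_of_forall_le (hu : IsKazdanWarnerSolution ω μ h c u)
    (hnonneg : ∀ x y, 0 ≤ ω x y) (hμ : ∀ x, 0 < μ x) (hH : ∀ x, |h x| ≤ H) {x₁ : V}
    (hx₁ : ∀ z, u x₁ ≤ u z) : -c ≤ H * exp (u x₁) := by
  have hlap := combLap_nonneg_of_forall_le (hnonneg x₁) hx₁
  rw [hu x₁] at hlap
  have hce : h x₁ * exp (u x₁) ≤ c := by nlinarith [hμ x₁]
  have hhexp : -h x₁ * exp (u x₁) ≤ H * exp (u x₁) :=
    mul_le_mul_of_nonneg_right ((neg_le_abs _).trans (hH x₁)) (exp_pos _).le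
  linarith

theorem le_mul_exp_of_forall_le (hu : IsKazdanWarnerSolution ω μ h c u)
    (hsymm : ∀ x y, ω x y = ω y x) (hμ : ∀ x, 0 < μ x) (hH : ∀ x, |h x| ≤ H) {x₀ : V}
    (hx₀ : ∀ z, u z ≤ u x₀) : c ≤ H * exp (u x₀) := by
  have hVol : 0 < ∑ x, μ x := sum_pos (fun x _ => hμ x) ⟨x₀, mem_univ _⟩
  have hsum : c * ∑ x, μ x ≤ H * exp (u x₀) * ∑ x, μ x := by
    rw [← hu.sum_mul_exp hsymm, mul_sum]
    refine sum_le_sum fun x _ => ?_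
    have := mul_le_mul ((le_abs_self _).trans (hH x)) (exp_le_exp.2 (hx₀ x)) (exp_pos _).le
      ((abs_nonneg _).trans (hH x))
    nlinarith [hμ x]
  exact le_of_mul_le_mul_right hsum hVol

theorem neg_graphInt_le (hu : IsKazdanWarnerSolution ω μ h 0 u) (hsymm : ∀ x y, ω x y = ω y x)
    (hμ : ∀ x, 0 < μ x) (hH : ∀ x, |h x| ≤ H) {x₀ : V} {P : ℝ} (hx₀ : ∀ z, u z ≤ u x₀)
    (hosc : ∀ y, u x₀ - u y ≤ P) : -graphInt μ h ≤ P * (H * ∑ x, μ x) := by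
  have hbal : ∑ x, h x * μ x * exp (u x) = 0 := by simpa using hu.sum_mul_exp hsymm
  have hterm : ∀ x, -(h x * μ x) * exp (u x₀) ≤
      P * (H * μ x) * exp (u x₀) - h x * μ x * exp (u x) := by
    intro x
    have hdiff := exp_sub_exp_le_mul (by linarith [hosc x] : u x₀ - P ≤ u x)
    have hmono : exp (u x) ≤ exp (u x₀) := exp_le_exp.2 (hx₀ x)
    have habs : -h x * (exp (u x₀) - exp (u x)) ≤ H * (P * exp (u x₀)) := by
      nlinarith [neg_le_abs (h x), hH x, abs_nonneg (h x)]
    nlinarith [hμ x]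
  have hsum := sum_le_sum fun x (_ : x ∈ univ) => hterm x
  rw [sum_sub_distrib, hbal, ← sum_mul, ← sum_mul, ← mul_sum,
    ← mul_sum, sum_neg_distrib] at hsum
  exact le_of_mul_le_mul_right (by simpa [graphInt] using hsum) (exp_pos _)

theorem abs_sub_mul_exp_le (hu : IsKazdanWarnerSolution ω μ h c u) (hnonneg : ∀ x y, 0 ≤ ω x y)
    (hμ : ∀ x, 0 < μ x) (hH : ∀ x, |h x| ≤ H) (hs : ∀ x, u x ≤ s) (x : V) :
    (|h x| - h x) * μ x * exp (u x) ≤ 2 * (μ x * (H + |c|) + (∑ y, ω x y) * max s 0) := by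
  have hrow : 0 ≤ ∑ y, ω x y := sum_nonneg fun y _ => hnonneg x y
  have hH0 : 0 ≤ H := (abs_nonneg _).trans (hH x)
  have hrhs : 0 ≤ μ x * (H + |c|) + (∑ y, ω x y) * max s 0 := by
    have := hμ x
    positivity
  rcases le_or_gt 0 (h x) with hpos | hneg
  · rw [abs_of_nonneg hpos, sub_self, zero_mul, zero_mul]
    linarith
  rw [abs_of_neg hneg]
  have hlap := combLap_le_mul_of_forall_le (hnonneg x) hs
  rw [hu x] at hlap
  have hnegpart : -h x * μ x * exp (u x) ≤ μ x * (H + |c|) + (∑ y, ω x y) * max s 0 := by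
    rcases le_or_gt (u x) 0 with hux | hux
    · have hexp : exp (u x) ≤ 1 := exp_le_one_iff.2 hux
      have hhexp : -h x * exp (u x) ≤ H :=
        (mul_le_of_le_one_right (by linarith) hexp).trans ((neg_le_abs _).trans (hH x))
      nlinarith [hμ x, abs_nonneg c, mul_nonneg hrow (le_max_right s 0)]
    · have hgap : s - u x ≤ max s 0 := by
        rw [max_eq_left (hux.le.trans (hs x))]
        linarith
      nlinarith [hμ x, neg_abs_le c, mul_le_mul_of_nonneg_left hgap hrow]
  linarith

theorem sum_abs_mul_exp_le (hu : IsKazdanWarnerSolution ω μ h c u)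
    (hsymm : ∀ x y, ω x y = ω y x) (hnonneg : ∀ x y, 0 ≤ ω x y) (hμ : ∀ x, 0 < μ x)
    (hH : ∀ x, |h x| ≤ H) (hs : ∀ x, u x ≤ s) :
    ∑ x, |h x| * μ x * exp (u x) ≤
      |c| * ∑ x, μ x + 2 * ((∑ x, μ x) * (H + |c|) + (∑ x, ∑ y, ω x y) * max s 0) := by
  have hsplit : ∑ x, |h x| * μ x * exp (u x) =
      ∑ x, h x * μ x * exp (u x) + ∑ x, (|h x| - h x) * μ x * exp (u x) := by
    rw [← sum_add_distrib]
    exact sum_congr rfl fun x _ => by ring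
  have hneg : ∑ x, (|h x| - h x) * μ x * exp (u x) ≤
      2 * ((∑ x, μ x) * (H + |c|) + (∑ x, ∑ y, ω x y) * max s 0) := by
    rw [sum_mul, sum_mul, ← sum_add_distrib, mul_sum]
    exact sum_le_sum fun x _ => hu.abs_sub_mul_exp_le hnonneg hμ hH hs x
  have hc : c * ∑ x, μ x ≤ |c| * ∑ x, μ x :=
    mul_le_mul_of_nonneg_right (le_abs_self c) (sum_nonneg fun x _ => (hμ x).le)
  rw [hsplit, hu.sum_mul_exp hsymm]
  linarith

end IsKazdanWarnerSolution

section APriori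

variable {V : Type*} [Fintype V] {ω : V → V → ℝ} {μ h : V → ℝ} {c K : ℝ}

/-- Upper bound: near a maximum of `u` there is a vertex where `h ≠ 0`, so `e^{max u}` is
controlled by `∫ |h| e^u dμ`, which grows at most linearly in `max u`. -/
theorem exists_upper_bound (hsymm : ∀ x y, ω x y = ω y x) (hnonneg : ∀ x y, 0 ≤ ω x y)
    (hμ : ∀ x, 0 < μ x) (hK : IsHarnackConst ω K) {b : V} (hb : h b ≠ 0) :
    ∃ S, ∀ u, IsKazdanWarnerSolution ω μ h c u → ∀ x, u x ≤ S := by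
  obtain ⟨η, hη, hηle⟩ := exists_pos_le_of_pos fun x => |h x| * μ x
  set vol := ∑ x, μ x
  set H := ∑ x, |h x|
  have hvol : 0 ≤ vol := sum_nonneg fun x _ => (hμ x).le
  have hH : ∀ x, |h x| ≤ H := fun x =>
    single_le_sum (fun y _ => abs_nonneg (h y)) (mem_univ x)
  have hH0 : 0 ≤ H := sum_nonneg fun y _ => abs_nonneg (h y)
  obtain ⟨S, hS⟩ := exists_forall_le_of_mul_exp_le (α := η * exp (-(K * (vol * |c|))))
    (β := |c| * vol + 2 * (vol * (H + |c|))) (γ := 2 * ∑ x, ∑ y, ω x y) (by positivity)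
    (by positivity)
  refine ⟨S, fun u hu x => ?_⟩
  have : Nonempty V := ⟨x⟩
  obtain ⟨x₀, hx₀⟩ := Finite.exists_max u
  refine (hx₀ x).trans (hS _ ?_)
  obtain ⟨y, hy, hyK⟩ := hK (h · ≠ 0) u (u x₀) (vol * |c|) x₀ b hx₀ (by positivity) hb
    fun z hz => by
      rw [hu z, not_not.1 hz, zero_mul, sub_zero]
      nlinarith [neg_abs_le c, hμ z, abs_nonneg c,
        single_le_sum (fun x _ => (hμ x).le) (mem_univ z)]
  have hclose : u x₀ - K * (vol * |c|) ≤ u y := by nlinarith [abs_nonneg c]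
  calc η * exp (-(K * (vol * |c|))) * exp (u x₀) = η * exp (u x₀ - K * (vol * |c|)) := by
        rw [mul_assoc, ← exp_add, neg_add_eq_sub]
    _ ≤ |h y| * μ y * exp (u y) :=
        mul_le_mul (hηle y (mul_pos (abs_pos.2 hy) (hμ y))) (exp_le_exp.2 hclose)
          (exp_pos _).le (mul_nonneg (abs_nonneg _) (hμ y).le)
    _ ≤ ∑ z, |h z| * μ z * exp (u z) :=
        single_le_sum (f := fun z => |h z| * μ z * exp (u z))
          (fun z _ => by have := hμ z; positivity) (mem_univ y)
    _ ≤ _ := hu.sum_abs_mul_exp_le hsymm hnonneg hμ hH hx₀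
    _ = _ := by ring

/-- The maximum of a solution is bounded below: by the minimum principle if `c < 0`, by the
balance `∫ h e^u dμ = c ∫ 1 dμ` if `c > 0`, and by the same balance combined with the Harnack
estimate if `c = 0`. -/
theorem exists_lower_bound_max (hsymm : ∀ x y, ω x y = ω y x) (hnonneg : ∀ x y, 0 ≤ ω x y)
    (hμ : ∀ x, 0 < μ x) (hK : IsHarnackConst ω K) (hint : c = 0 → graphInt μ h < 0) :
    ∃ m, ∀ u, IsKazdanWarnerSolution ω μ h c u → ∀ x₀, (∀ z, u z ≤ u x₀) → m ≤ u x₀ := by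
  set vol := ∑ x, μ x
  set H := ∑ x, |h x|
  have hH : ∀ x, |h x| ≤ H := fun x =>
    single_le_sum (fun y _ => abs_nonneg (h y)) (mem_univ x)
  rcases lt_trichotomy c 0 with hc | rfl | hc
  · refine ⟨log (-c / H), fun u hu x₀ hx₀ => ?_⟩
    have : Nonempty V := ⟨x₀⟩
    obtain ⟨x₁, hx₁⟩ := Finite.exists_min u
    exact (log_div_le_of_le_mul_exp (neg_pos.2 hc)
      (hu.neg_le_mul_exp_of_forall_le hnonneg hμ hH hx₁)).trans (hx₁ x₀)
  · refine ⟨log (-graphInt μ h / (K * (vol * H) * (H * vol))), fun u hu x₀ hx₀ => ?_⟩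
    refine log_div_le_of_le_mul_exp (neg_pos.2 (hint rfl)) ?_
    have := hu.neg_graphInt_le hsymm hμ hH hx₀ (hu.sub_le_of_forall_le hμ hK hH hx₀)
    rw [abs_zero, zero_add] at this
    linarith
  · exact ⟨log (c / H), fun u hu x₀ hx₀ =>
      log_div_le_of_le_mul_exp hc (hu.le_mul_exp_of_forall_le hsymm hμ hH hx₀)⟩

theorem exists_lower_bound (hsymm : ∀ x y, ω x y = ω y x) (hnonneg : ∀ x y, 0 ≤ ω x y)
    (hμ : ∀ x, 0 < μ x) (hK : IsHarnackConst ω K) (hint : c = 0 → graphInt μ h < 0) {S : ℝ}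
    (hS : ∀ u, IsKazdanWarnerSolution ω μ h c u → ∀ x, u x ≤ S) :
    ∃ L, ∀ u, IsKazdanWarnerSolution ω μ h c u → ∀ x, L ≤ u x := by
  obtain ⟨m, hm⟩ := exists_lower_bound_max hsymm hnonneg hμ hK hint
  set vol := ∑ x, μ x
  set H := ∑ x, |h x|
  have hH : ∀ x, |h x| ≤ H := fun x =>
    single_le_sum (fun y _ => abs_nonneg (h y)) (mem_univ x)
  refine ⟨m - K * (vol * (|c| + H * exp S)), fun u hu x => ?_⟩
  have : Nonempty V := ⟨x⟩
  obtain ⟨x₀, hx₀⟩ := Finite.exists_max u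
  have hosc := hu.sub_le_of_forall_le hμ hK hH hx₀ x
  have hexp : vol * (|c| + H * exp (u x₀)) ≤ vol * (|c| + H * exp S) :=
    mul_le_mul_of_nonneg_left
      (by gcongr; exact hS u hu x₀)
      (sum_nonneg fun x _ => (hμ x).le)
  nlinarith [hm u hu x₀ hx₀, hK.one_le]

end APriori

theorem kazdan_warner_a_priori_general {V : Type*} [Fintype V]
    (ω : V → V → ℝ) (μ : V → ℝ)
    (hsymm : ∀ x y, ω x y = ω y x)
    (hnonneg : ∀ x y, 0 ≤ ω x y)
    (hconn : graphConn ω)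
    (hμ : ∀ x, 0 < μ x)
    (h : V → ℝ) (c : ℝ)
    (h1 : 0 < c → ∃ x, 0 < h x)
    (h2 : c = 0 → (∃ x, 0 < h x) ∧ (∃ x, h x < 0) ∧ graphInt μ h < 0)
    (h3 : c < 0 → ∃ x, h x < 0) :
    ∃ C > 0, ∀ u : V → ℝ,
      (∀ x, -graphLap ω μ u x = h x * Real.exp (u x) - c) →
      ∀ x, |u x| ≤ C := by
  obtain ⟨b, hb⟩ : ∃ b, h b ≠ 0 := by
    rcases lt_trichotomy c 0 with hc | hc | hc
    · obtain ⟨x, hx⟩ := h3 hc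
      exact ⟨x, hx.ne⟩
    · obtain ⟨⟨x, hx⟩, -, -⟩ := h2 hc
      exact ⟨x, hx.ne'⟩
    · obtain ⟨x, hx⟩ := h1 hc
      exact ⟨x, hx.ne'⟩
  obtain ⟨K, hK⟩ := exists_isHarnackConst hnonneg hconn
  obtain ⟨S, hS⟩ := exists_upper_bound hsymm hnonneg hμ hK hb
  obtain ⟨L, hL⟩ := exists_lower_bound hsymm hnonneg hμ hK (fun hc => (h2 hc).2.2) hS
  refine ⟨|S| + |L| + 1, by positivity, fun u hu x => abs_le.2 ⟨?_, ?_⟩⟩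
  · linarith [hL u (isKazdanWarnerSolution_of_graphLap hμ hu) x, neg_abs_le L, abs_nonneg S]
  · linarith [hS u (isKazdanWarnerSolution_of_graphLap hμ hu) x, le_abs_self S, abs_nonneg L]

/-- A priori estimate for the Kazdan–Warner equation `−Δu = h e^u − c`. -/
theorem kazdan_warner_a_priori {V : Type*} [Fintype V] [Nonempty V]
    (ω : V → V → ℝ) (μ : V → ℝ)
    (hsymm : ∀ x y, ω x y = ω y x)
    (hnonneg : ∀ x y, 0 ≤ ω x y)
    (hconn : graphConn ω)
    (hμ : ∀ x, 0 < μ x)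
    (h : V → ℝ) (c : ℝ)
    (h1 : 0 < c → ∃ x, 0 < h x)
    (h2 : c = 0 → (∃ x, 0 < h x) ∧ (∃ x, h x < 0) ∧ graphInt μ h < 0)
    (h3 : c < 0 → ∃ x, h x < 0) :
    ∃ C > 0, ∀ u : V → ℝ,
      (∀ x, -graphLap ω μ u x = h x * Real.exp (u x) - c) →
      ∀ x, |u x| ≤ C :=
  kazdan_warner_a_priori_general ω μ hsymm hnonneg hconn hμ h c h1 h2 h3
end

section
/- Uniform compactness: For every constant A > 0 there exists a constant C > 0 (depending only on A, V, ω and μ) with the following property. Whenever h : V → ℝ and c ∈ ℝ satisfy: (1) max_{x∈V}(|h(x)| + |c|) ≤ A; (2) if h(x) > 0 for some x ∈ V then h(x) ≥ A⁻¹; (3) if c > 0 then c ≥ A⁻¹; (4) if c = 0 then ∫_V h dμ ≤ −A⁻¹; (5) if c < 0 then c ≤ −A⁻¹ and min_{x∈V} h(x) ≤ −A⁻¹; then every solution u : V → ℝ of −Δu(x) = h(x)e^{u(x)} − c for all x ∈ V satisfies max_{x∈V} |u(x)| ≤ C. -/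
open Finset Real

namespace KWaux

/-- Recursive constant sequence used in the chain propagation. -/
noncomputable def kseq (S w : ℝ) : ℕ → ℝ
  | 0 => 0
  | (i+1) => kseq S w i + (1 + S * kseq S w i) / w

lemma kseq_nonneg {S w : ℝ} (hS : 0 ≤ S) (hw : 0 < w) : ∀ i, 0 ≤ kseq S w i := by
  intro i
  induction i with
  | zero => simp [kseq]
  | succ i ih =>
    have h1 : 0 ≤ (1 + S * kseq S w i) / w := by positivity
    simp only [kseq]; linarith

lemma kseq_mono {S w : ℝ} (hS : 0 ≤ S) (hw : 0 < w) : Monotone (kseq S w) := by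
  apply monotone_nat_of_le_succ
  intro i
  have h0 := kseq_nonneg hS hw i
  have h1 : 0 ≤ (1 + S * kseq S w i) / w := by positivity
  simp only [kseq]; linarith

lemma kseq_one_le {S w : ℝ} (hS : 0 ≤ S) (hw : 0 < w) {n : ℕ} (hn : 1 ≤ n) :
    1 / w ≤ kseq S w n := by
  have h := kseq_mono hS hw hn
  simp only [kseq, mul_zero, add_zero, zero_add] at h
  exact h

lemma splice {V : Type*} [Fintype V] {ω : V → V → ℝ} {x y : V} {m : ℕ}
    (p : ℕ → V) (h0 : p 0 = x) (hm : p m = y)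
    (hc : ∀ i < m, 0 < ω (p i) (p (i+1)))
    (i j : ℕ) (hij : i < j) (hjm : j < m + 1) (hpij : p i = p j) :
    ∃ k < m, ∃ q : ℕ → V, q 0 = x ∧ q k = y ∧
      ∀ l < k, 0 < ω (q l) (q (l+1)) := by
  classical
  set d := j - i with hd
  refine ⟨m - d, by omega, fun k => if k < i then p k else p (k + d), ?_, ?_, ?_⟩
  · show (if (0:ℕ) < i then p 0 else p (0 + d)) = x
    by_cases h0i : 0 < i
    · rw [if_pos h0i, h0]
    · rw [if_neg h0i]
      have h1 : 0 + d = j := by omega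
      have hi0 : i = 0 := by omega
      rw [h1, ← hpij, hi0, h0]
  · show (if m - d < i then p (m - d) else p (m - d + d)) = y
    have hni : ¬ (m - d < i) := by omega
    have h1 : m - d + d = m := by omega
    rw [if_neg hni, h1, hm]
  · intro l hl
    show 0 < ω (if l < i then p l else p (l + d)) (if l + 1 < i then p (l+1) else p (l + 1 + d))
    by_cases h1 : l + 1 < i
    · have h2 : l < i := by omega
      rw [if_pos h1, if_pos h2]
      exact hc l (by omega)
    · by_cases h2 : l < i
      · have hli : i = l + 1 := by omega
        have he : l + 1 + d = j := by omega
        rw [if_pos h2, if_neg h1, he, ← hpij, hli]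
        exact hc l (by omega)
      · have he : l + 1 + d = l + d + 1 := by omega
        rw [if_neg h2, if_neg h1, he]
        exact hc (l + d) (by omega)

/-- Connectivity with chains of length at most `card V`. -/
lemma short_chain {V : Type*} [Fintype V] (ω : V → V → ℝ) (x y : V)
    (hch : ∃ (m : ℕ) (p : ℕ → V), p 0 = x ∧ p m = y ∧ ∀ i < m, 0 < ω (p i) (p (i+1))) :
    ∃ (m : ℕ) (p : ℕ → V), m ≤ Fintype.card V ∧ p 0 = x ∧ p m = y ∧
      ∀ i < m, 0 < ω (p i) (p (i+1)) := by
  obtain ⟨m, p, h0, hm, hc⟩ := hch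
  induction m using Nat.strong_induction_on generalizing p with
  | _ m IH =>
    by_cases hle : m ≤ Fintype.card V
    · exact ⟨m, p, hle, h0, hm, hc⟩
    · push_neg at hle
      have hcard : Fintype.card V < Fintype.card (Fin (m+1)) := by
        simpa using Nat.lt_succ_of_lt hle
      obtain ⟨a, b, hab, heq⟩ :=
        Fintype.exists_ne_map_eq_of_card_lt (fun i : Fin (m+1) => p i.val) hcard
      have hvne : a.val ≠ b.val := fun hv => hab (Fin.ext hv)
      rcases lt_or_gt_of_ne hvne with hlt | hlt
      · obtain ⟨k, hk, q, hq0, hqk, hqc⟩ := splice p h0 hm hc a.val b.val hlt b.isLt heq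
        exact IH k hk q hq0 hqk hqc
      · obtain ⟨k, hk, q, hq0, hqk, hqc⟩ := splice p h0 hm hc b.val a.val hlt a.isLt heq.symm
        exact IH k hk q hq0 hqk hqc

/-- Core chain-propagation estimate. -/
lemma core {V : Type*} [Fintype V] [Nonempty V] (ω : V → V → ℝ)
    (hnonneg : ∀ x y, 0 ≤ ω x y) (hconn : graphConn ω)
    (S w : ℝ) (hw : 0 < w) (hwle : ∀ x y, 0 < ω x y → w ≤ ω x y)
    (hS : ∀ x, ∑ z, ω x z ≤ S)
    (u : V → ℝ) (x0 : V) (hmin : ∀ z, u x0 ≤ u z)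
    (a : ℝ) (ha : 0 ≤ a) (Q : V → Prop)
    (hQ : ∀ x, u x ≤ u x0 + a * kseq S w (Fintype.card V) → Q x)
    (hstep : ∀ x, Q x → ∑ z, ω x z * (u z - u x) ≤ a) :
    ∀ y, u y ≤ u x0 + a * kseq S w (Fintype.card V) := by
  classical
  have hS0 : 0 ≤ S := le_trans (Finset.sum_nonneg fun z _ => hnonneg _ z) (hS (Classical.arbitrary V))
  set N := Fintype.card V with hN
  have hknn := kseq_nonneg hS0 hw
  have hkm := kseq_mono hS0 hw
  intro y
  by_cases hxy : x0 = y
  · subst hxy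
    nlinarith [hknn N]
  · obtain ⟨m, p, hmN, h0, hm, hc⟩ := short_chain ω x0 y (hconn x0 y hxy)
    have key : ∀ i, i ≤ m → u (p i) ≤ u x0 + a * kseq S w i := by
      intro i
      induction i with
      | zero => intro _; rw [h0]; simp [kseq]
      | succ i IH =>
        intro hi
        have hi' : i ≤ m := by omega
        have hib := IH hi'
        have hedge : 0 < ω (p i) (p (i+1)) := hc i (by omega)
        set X := p i with hX
        set Y := p (i+1) with hY
        have hQX : Q X := by
          apply hQ
          have : kseq S w i ≤ kseq S w N := hkm (le_trans hi' hmN)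
          nlinarith
        have hsplit : ω X Y * (u Y - u X) =
            (∑ z, ω X z * (u z - u X)) - ∑ z ∈ univ.erase Y, ω X z * (u z - u X) := by
          rw [← Finset.sum_erase_add univ _ (mem_univ Y)]; ring
        have hrest : -(S * (u X - u x0)) ≤ ∑ z ∈ univ.erase Y, ω X z * (u z - u X) := by
          have h1 : ∀ z ∈ univ.erase Y, -(ω X z * (u X - u x0)) ≤ ω X z * (u z - u X) := by
            intro z _
            have := hmin z
            have := hmin X
            nlinarith [hnonneg X z]
          have h2 : ∑ z ∈ univ.erase Y, -(ω X z * (u X - u x0)) ≤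
              ∑ z ∈ univ.erase Y, ω X z * (u z - u X) := Finset.sum_le_sum h1
          have h3 : ∑ z ∈ univ.erase Y, -(ω X z * (u X - u x0)) =
              -((∑ z ∈ univ.erase Y, ω X z) * (u X - u x0)) := by
            rw [Finset.sum_neg_distrib, Finset.sum_mul]
          have h4 : ∑ z ∈ univ.erase Y, ω X z ≤ S := by
            refine le_trans ?_ (hS X)
            exact Finset.sum_le_sum_of_subset_of_nonneg (Finset.erase_subset _ _)
              (fun z _ _ => hnonneg X z)
          have h5 : 0 ≤ u X - u x0 := by linarith [hmin X]
          nlinarith [Finset.sum_nonneg (fun z (_ : z ∈ univ.erase Y) => hnonneg X z)]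
        have hup : ω X Y * (u Y - u X) ≤ a + S * (u X - u x0) := by
          have := hstep X hQX
          rw [hsplit]; linarith
        have hnum : ω X Y * (u Y - u X) ≤ a * (1 + S * kseq S w i) := by
          have h5 : 0 ≤ u X - u x0 := by linarith [hmin X]
          have : u X - u x0 ≤ a * kseq S w i := by linarith
          nlinarith
        have hdiv : u Y - u X ≤ a * (1 + S * kseq S w i) / w := by
          have hnumnn : 0 ≤ a * (1 + S * kseq S w i) :=
            mul_nonneg ha (by nlinarith [mul_nonneg hS0 (hknn i)])
          rcases le_or_gt (u Y - u X) 0 with hle | hlt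
          · have : 0 ≤ a * (1 + S * kseq S w i) / w := by positivity
            linarith
          · rw [le_div_iff₀ hw]
            have hwXY := hwle X Y hedge
            nlinarith
        have hfin : u Y ≤ u x0 + a * kseq S w (i+1) := by
          have hk1 : a * kseq S w (i+1) = a * kseq S w i + a * (1 + S * kseq S w i) / w := by
            simp only [kseq]; ring
          rw [hk1]; linarith
        exact hfin
    have := key m le_rfl
    rw [hm] at this
    have hmono : kseq S w m ≤ kseq S w N := hkm hmN
    nlinarith

lemma double_sum_zero {V : Type*} [Fintype V] (ω : V → V → ℝ)
    (hsymm : ∀ x y, ω x y = ω y x) (u : V → ℝ) :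
    ∑ x, ∑ z, ω x z * (u z - u x) = 0 := by
  have h1 : ∑ x, ∑ z, ω x z * (u z - u x) = ∑ z, ∑ x, ω x z * (u z - u x) :=
    Finset.sum_comm
  have h2 : ∑ z, ∑ x, ω x z * (u z - u x) = ∑ x, ∑ z, -(ω x z * (u z - u x)) := by
    apply Finset.sum_congr rfl
    intro a _
    apply Finset.sum_congr rfl
    intro b _
    rw [hsymm b a]; ring
  have h3 : ∑ x, ∑ z, -(ω x z * (u z - u x)) = - ∑ x, ∑ z, ω x z * (u z - u x) := by
    rw [← Finset.sum_neg_distrib]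
    apply Finset.sum_congr rfl
    intro a _
    rw [Finset.sum_neg_distrib]
  linarith [h1.trans (h2.trans h3)]

lemma mul_bound {a b t s : ℝ} (ha : 0 < a) (hab : a ≤ b) (hts : t ≤ s) (hs : 0 ≤ s) :
    a * t ≤ b * s := by nlinarith

end KWaux
set_option maxHeartbeats 2000000 in
/-- Uniform compactness for the Kazdan–Warner equation: solutions are bounded by a
constant depending only on `A` and the graph data. -/
theorem kazdan_warner_uniform_compactness {V : Type*} [Fintype V] [Nonempty V]
    (ω : V → V → ℝ) (μ : V → ℝ)
    (hsymm : ∀ x y, ω x y = ω y x)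
    (hnonneg : ∀ x y, 0 ≤ ω x y)
    (hconn : graphConn ω)
    (hμ : ∀ x, 0 < μ x) :
    ∀ A > (0 : ℝ), ∃ C > (0 : ℝ), ∀ (h : V → ℝ) (c : ℝ),
      (∀ x, |h x| + |c| ≤ A) →
      (∀ x, 0 < h x → A⁻¹ ≤ h x) →
      (0 < c → A⁻¹ ≤ c) →
      (c = 0 → graphInt μ h ≤ -A⁻¹) →
      (c < 0 → c ≤ -A⁻¹ ∧ (⨅ x, h x) ≤ -A⁻¹) →
      ∀ u : V → ℝ,
        (∀ x, -graphLap ω μ u x = h x * Real.exp (u x) - c) →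
        ∀ x, |u x| ≤ C := by
  classical
  intro A hA
  have hinvA : 0 < A⁻¹ := inv_pos.mpr hA
  have hAA : A⁻¹ * A = 1 := inv_mul_cancel₀ (ne_of_gt hA)
  -- graph constants
  obtain ⟨xm, hxm⟩ := Finite.exists_min μ
  obtain ⟨xM, hxM⟩ := Finite.exists_max μ
  set μm := μ xm with hμmdef
  set μM := μ xM with hμMdef
  have hμm : 0 < μm := hμ xm
  have hμM : 0 < μM := hμ xM
  set μV := ∑ x, μ x with hμVdef
  have hμV : 0 < μV := Finset.sum_pos (fun x _ => hμ x) univ_nonempty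
  have hμMV : μM ≤ μV := Finset.single_le_sum (fun x _ => le_of_lt (hμ x)) (mem_univ xM)
  set Nn := Fintype.card V with hNndef
  have hNn1 : 1 ≤ Nn := Fintype.card_pos
  set Nr : ℝ := (Nn : ℝ) with hNrdef
  have hNr1 : (1:ℝ) ≤ Nr := by rw [hNrdef]; exact_mod_cast hNn1
  have hNr0 : 0 < Nr := by linarith
  obtain ⟨xS, hxS⟩ := Finite.exists_max (fun x => ∑ z, ω x z)
  set S := ∑ z, ω xS z with hSdef
  have hSle : ∀ x, ∑ z, ω x z ≤ S := hxS
  have hS0 : 0 ≤ S := Finset.sum_nonneg fun z _ => hnonneg xS z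
  obtain ⟨w, hw, hwle⟩ : ∃ w : ℝ, 0 < w ∧ ∀ x y, 0 < ω x y → w ≤ ω x y := by
    by_cases hne : ((univ : Finset (V × V)).filter fun p => 0 < ω p.1 p.2).Nonempty
    · refine ⟨((univ : Finset (V × V)).filter fun p => 0 < ω p.1 p.2).inf' hne
        (fun p => ω p.1 p.2), ?_, ?_⟩
      · rw [Finset.lt_inf'_iff]
        intro p hp
        exact (Finset.mem_filter.mp hp).2
      · intro x y hxy
        exact Finset.inf'_le _ (Finset.mem_filter.mpr ⟨mem_univ (x, y), hxy⟩)
    · refine ⟨1, one_pos, fun x y hxy => absurd ?_ hne⟩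
      exact ⟨(x, y), Finset.mem_filter.mpr ⟨mem_univ _, hxy⟩⟩
  set K := KWaux.kseq S w Nn with hKdef
  have hK0 : 0 < K := lt_of_lt_of_le (by positivity) (KWaux.kseq_one_le hS0 hw hNn1)
  -- the constants
  set B := A * μM * K with hBdef
  have hB0 : 0 < B := by positivity
  set α1 := A⁻¹ * μm * Real.exp (-B) / (2 * Nr * μM) with hα1def
  have hα1 : 0 < α1 := by positivity
  set L := |Real.log α1| + |Real.log A| with hLdef
  have hL0 : 0 ≤ L := by positivity
  set E3 := 2 * A * A * μV * Real.exp B / μm with hE3def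
  set E4 := (A * μM + S * L) / (μm * α1) with hE4def
  set δ := min (A⁻¹ / (Nr * μM)) A⁻¹ with hδdef
  have hδ0 : 0 < δ := lt_min (by positivity) hinvA
  set E5 := (A * μM + S * B) * Real.exp B / (μm * δ) with hE5def
  set E := max 1 (max E3 (max E4 E5)) with hEdef
  have hE1 : (1:ℝ) ≤ E := le_max_left _ _
  have hE0 : 0 < E := lt_of_lt_of_le one_pos hE1
  have hE3E : E3 ≤ E := le_trans (le_max_left _ _) (le_max_right _ _)
  have hE4E : E4 ≤ E := le_trans (le_trans (le_max_left _ _) (le_max_right E3 _)) (le_max_right _ _)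
  have hE5E : E5 ≤ E := le_trans (le_trans (le_max_right E4 _) (le_max_right E3 _)) (le_max_right _ _)
  set E' := min (A⁻¹ * A⁻¹) (A⁻¹ / (A * A * μV * μM * K)) with hE'def
  have hE'0 : 0 < E' := lt_min (by positivity) (by positivity)
  set astar := μM * (A + A * E) with hastardef
  have hastar : 0 < astar := by positivity
  set C := |Real.log E| + |Real.log E'| + astar * K + 1 with hCdef
  have hC0 : 0 < C := by positivity
  have hNrne : Nr ≠ 0 := ne_of_gt hNr0
  have hNrμM : (0:ℝ) < Nr * μM := mul_pos hNr0 hμM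
  clear_value μm μM μV Nr S K B α1 L E3 E4 δ E5 E E' astar C
  have coreK : ∀ (u' : V → ℝ) (y0 : V), (∀ z, u' y0 ≤ u' z) → ∀ (a : ℝ), 0 ≤ a →
      ∀ (Q : V → Prop), (∀ x, u' x ≤ u' y0 + a * K → Q x) →
      (∀ x, Q x → ∑ z, ω x z * (u' z - u' x) ≤ a) →
      ∀ y, u' y ≤ u' y0 + a * K := by
    intro u' y0 hm a ha Q hQ hstep y
    have hres := KWaux.core ω hnonneg hconn S w hw hwle hSle u' y0 hm a ha Q ?_ hstep y
    · rw [hKdef, hNndef]; exact hres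
    · intro x hx
      apply hQ
      rw [hKdef, hNndef]
      exact hx
  refine ⟨C, hC0, ?_⟩
  intro h c h1 h2 h3 h4 h5 u hequ
  -- basic facts for this instance
  have hcA : |c| ≤ A := le_trans (le_add_of_nonneg_left (abs_nonneg _)) (h1 (Classical.arbitrary V))
  have hhA : ∀ x, |h x| ≤ A := fun x => le_trans (le_add_of_nonneg_right (abs_nonneg _)) (h1 x)
  have hlapEq : ∀ x, ∑ z, ω x z * (u z - u x) = μ x * (c - h x * Real.exp (u x)) := by
    intro x
    have he := hequ x
    have hμx := hμ x
    have : graphLap ω μ u x = c - h x * Real.exp (u x) := by linarith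
    rw [← this]
    unfold graphLap
    field_simp
  have hsum : ∑ x, h x * Real.exp (u x) * μ x = c * μV := by
    have hdz : ∑ x, ∑ z, ω x z * (u z - u x) = 0 := KWaux.double_sum_zero ω hsymm u
    have hs1 : ∑ x, μ x * (c - h x * Real.exp (u x)) = 0 := by
      rw [← Finset.sum_congr rfl (fun x _ => hlapEq x)]
      exact hdz
    have hexpand : ∑ x, μ x * (c - h x * Real.exp (u x))
        = c * μV - ∑ x, h x * Real.exp (u x) * μ x := by
      rw [hμVdef, Finset.mul_sum, ← Finset.sum_sub_distrib]
      exact Finset.sum_congr rfl fun x _ => by ring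
    linarith
  obtain ⟨x0, hx0⟩ := Finite.exists_max u
  set M0 := u x0 with hM0def
  obtain ⟨x1, hx1⟩ := Finite.exists_min u
  set m0 := u x1 with hm0def
  have hexpM0 : ∀ x, Real.exp (u x) ≤ Real.exp M0 := fun x => Real.exp_le_exp.mpr (hx0 x)
  -- uniform upper bound for sums of the Laplacian type
  have hsumub : ∀ x, ∑ z, ω x z * (u z - u x) ≤ S * (M0 - u x) := by
    intro x
    have hterm : ∀ z ∈ univ, ω x z * (u z - u x) ≤ ω x z * (M0 - u x) := fun z _ =>
      mul_le_mul_of_nonneg_left (by linarith [hx0 z]) (hnonneg x z)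
    refine le_trans (Finset.sum_le_sum hterm) ?_
    rw [← Finset.sum_mul]
    have hxx := hSle x
    have hM0x : 0 ≤ M0 - u x := by linarith [hx0 x]
    exact mul_le_mul_of_nonneg_right hxx hM0x
  -- upper bound
  have hupper : Real.exp M0 ≤ E := by
    have he : Real.exp (M0 - B) * Real.exp B = Real.exp M0 := by
      rw [← Real.exp_add]; ring_nf
    by_cases hcase : ∃ xs, M0 - B ≤ u xs ∧ 0 < h xs
    · obtain ⟨xs, hxs1, hxs2⟩ := hcase
      have hhxs : A⁻¹ ≤ h xs := h2 xs hxs2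
      by_cases hc2 : A⁻¹ * Real.exp (M0 - B) * μm ≤ 2 * (A * μV)
      · refine le_trans ?_ hE3E
        rw [hE3def, le_div_iff₀ hμm]
        have step : A * Real.exp B * (A⁻¹ * Real.exp (M0 - B) * μm)
            ≤ A * Real.exp B * (2 * (A * μV)) :=
          mul_le_mul_of_nonneg_left hc2 (le_of_lt (mul_pos hA (Real.exp_pos B)))
        have lhs : A * Real.exp B * (A⁻¹ * Real.exp (M0 - B) * μm)
            = (A * A⁻¹) * (Real.exp (M0 - B) * Real.exp B) * μm := by ring
        rw [mul_inv_cancel₀ (ne_of_gt hA), he, one_mul] at lhs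
        rw [lhs] at step
        linarith only [step]
      · push_neg at hc2
        set G := A⁻¹ * Real.exp (M0 - B) * μm - A * μV with hGdef
        clear_value G
        have hGhalf : A⁻¹ * Real.exp (M0 - B) * μm / 2 ≤ G := by rw [hGdef]; linarith
        have hGpos : 0 < G := lt_of_lt_of_le (by { have := mul_pos (mul_pos hinvA (Real.exp_pos (M0 - B))) hμm; linarith }) hGhalf
        have hterm : A⁻¹ * Real.exp (M0 - B) * μm ≤ h xs * Real.exp (u xs) * μ xs := by
          have q1 : Real.exp (M0 - B) ≤ Real.exp (u xs) := Real.exp_le_exp.mpr hxs1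
          have p1 : A⁻¹ * Real.exp (M0 - B) ≤ h xs * Real.exp (u xs) := by
            nlinarith only [q1, hhxs, hinvA, Real.exp_pos (M0 - B), Real.exp_pos (u xs)]
          have p2 := KWaux.mul_bound hμm (hxm xs) p1
            (le_of_lt (mul_pos (lt_of_lt_of_le hinvA hhxs) (Real.exp_pos (u xs))))
          linarith only [p2]
        have hsplit2 : ∑ z ∈ univ.erase xs, h z * Real.exp (u z) * μ z
            = c * μV - h xs * Real.exp (u xs) * μ xs := by
          rw [← hsum, ← Finset.sum_erase_add univ _ (mem_univ xs)]; ring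
        have hsumneg : ∑ z ∈ univ.erase xs, h z * Real.exp (u z) * μ z ≤ -G := by
          rw [hsplit2, hGdef]
          have : c * μV ≤ A * μV := by nlinarith only [le_abs_self c, hcA, hμV]
          linarith
        obtain ⟨yb, hybm, hyb⟩ : ∃ yb ∈ univ.erase xs,
            h yb * Real.exp (u yb) * μ yb * Nr ≤ -G := by
          by_contra hcon
          push_neg at hcon
          have hne : (univ.erase xs).Nonempty := by
            rcases Finset.eq_empty_or_nonempty (univ.erase xs) with hem | hne
            · rw [hem, Finset.sum_empty] at hsumneg; linarith
            · exact hne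
          have hlt : ∑ _z ∈ univ.erase xs, (-G / Nr)
              < ∑ z ∈ univ.erase xs, h z * Real.exp (u z) * μ z :=
            Finset.sum_lt_sum_of_nonempty hne (fun z hz => by
              rw [div_lt_iff₀ hNr0]; linarith [hcon z hz])
          rw [Finset.sum_const, nsmul_eq_mul] at hlt
          have hcard : (((univ : Finset V).erase xs).card : ℝ) = Nr - 1 := by
            rw [Finset.card_erase_of_mem (mem_univ xs), Finset.card_univ, ← hNndef,
              Nat.cast_sub hNn1]
            rw [hNrdef]; norm_num
          rw [hcard] at hlt
          have hdiv : (Nr - 1) * (-G / Nr) = -G + G / Nr := by field_simp [hNrne]; ring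
          have hGN : 0 < G / Nr := div_pos hGpos hNr0
          rw [hdiv] at hlt
          linarith [hsumneg]
        have hμyb := hμ yb
        have heyb := Real.exp_pos (u yb)
        have hhyb : h yb < 0 := by
          by_contra hcon
          push_neg at hcon
          nlinarith only [mul_pos (mul_pos heyb hμyb) hNr0, hGpos, hyb, hcon]
        set X := -(h yb) * Real.exp (u yb) with hXdef
        clear_value X
        have hX0 : 0 < X := by rw [hXdef]; exact mul_pos (by linarith) (Real.exp_pos _)
        have hq1 : G ≤ X * (Nr * μM) := by
          have q1 : G ≤ X * μ yb * Nr := by rw [hXdef]; linarith only [hyb]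
          have qq : 0 ≤ X * Nr * (μM - μ yb) :=
            mul_nonneg (le_of_lt (mul_pos hX0 hNr0)) (by linarith only [hxM yb])
          nlinarith only [q1, qq]
        have hq2 : α1 * Real.exp M0 ≤ X := by
          have e1 : α1 * (2 * Nr * μM) = A⁻¹ * μm * Real.exp (-B) := by
            rw [hα1def]
            exact div_mul_cancel₀ _ (ne_of_gt (by linarith only [mul_pos hNr0 hμM] : (0:ℝ) < 2 * Nr * μM))
          have e2 : A⁻¹ * Real.exp (M0 - B) * μm
              = A⁻¹ * μm * Real.exp (-B) * Real.exp M0 := by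
            have : Real.exp (M0 - B) = Real.exp (-B) * Real.exp M0 := by
              rw [← Real.exp_add]; ring_nf
            rw [this]; ring
          have e3 : A⁻¹ * μm * Real.exp (-B) * Real.exp M0 / 2 ≤ X * (Nr * μM) := by
            rw [← e2]; linarith [hGhalf, hq1]
          have t1 : α1 * (2 * Nr * μM) * Real.exp M0 / 2 ≤ X * (Nr * μM) := by
            rw [e1]; exact e3
          have t2 : α1 * Real.exp M0 * (Nr * μM) ≤ X * (Nr * μM) := by linarith only [t1]
          exact le_of_mul_le_mul_right t2 hNrμM
        have hq3 : M0 - u yb ≤ L := by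
          have e1 : α1 * Real.exp M0 ≤ A * Real.exp (u yb) := by
            have : X ≤ A * Real.exp (u yb) := by
              rw [hXdef]; nlinarith only [neg_abs_le (h yb), hhA yb, Real.exp_pos (u yb)]
            linarith [hq2]
          have e2 := Real.log_le_log (mul_pos hα1 (Real.exp_pos M0)) e1
          rw [Real.log_mul (ne_of_gt hα1) (ne_of_gt (Real.exp_pos M0)),
              Real.log_mul (ne_of_gt hA) (ne_of_gt (Real.exp_pos (u yb))),
              Real.log_exp, Real.log_exp] at e2
          rw [hLdef]
          have l1 := le_abs_self (Real.log A)
          have l2 := neg_abs_le (Real.log α1)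
          linarith
        have hlow : μm * X - A * μM ≤ ∑ z, ω yb z * (u z - u yb) := by
          rw [hlapEq yb]
          have e1 : μ yb * (c - h yb * Real.exp (u yb)) = μ yb * c + μ yb * X := by
            rw [hXdef]; ring
          rw [e1]
          have e2 : -(A * μM) ≤ μ yb * c := by
            nlinarith only [neg_abs_le c, hcA, hxM yb, hμyb, hμM, hA]
          have e3 : μm * X ≤ μ yb * X := by nlinarith only [hxm yb, hX0]
          linarith
        have hcomb : μm * X ≤ A * μM + S * L := by
          have q1 := hsumub yb
          have e4 : S * (M0 - u yb) ≤ S * L := by nlinarith only [hq3, hS0]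
          linarith
        refine le_trans ?_ hE4E
        rw [hE4def, le_div_iff₀ (mul_pos hμm hα1)]
        have s1 : μm * (α1 * Real.exp M0) ≤ μm * X :=
          mul_le_mul_of_nonneg_left hq2 (le_of_lt hμm)
        linarith only [s1, hcomb]
    · push_neg at hcase
      have hstepii : ∀ x, h x ≤ 0 → ∑ z, ω x z * (-(u z) - -(u x)) ≤ A * μM := by
        intro x hhx
        have e1 : ∑ z, ω x z * (-(u z) - -(u x)) = -(∑ z, ω x z * (u z - u x)) := by
          rw [← Finset.sum_neg_distrib]
          exact Finset.sum_congr rfl fun z _ => by ring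
        rw [e1, hlapEq x]
        have e2 : h x * Real.exp (u x) ≤ 0 :=
          mul_nonpos_of_nonpos_of_nonneg hhx (le_of_lt (Real.exp_pos (u x)))
        have e3 : h x * Real.exp (u x) - c ≤ A := by linarith only [e2, neg_abs_le c, hcA]
        have e4 := KWaux.mul_bound (hμ x) (hxM x) e3 (le_of_lt hA)
        linarith only [e4]
      have hallv := coreK (fun z => -(u z)) x0 (fun z => neg_le_neg (hx0 z))
        (A * μM) (le_of_lt (mul_pos hA hμM)) (fun x => h x ≤ 0)
        (fun x hx => hcase x (by simp only [hM0def, hBdef]; linarith))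
        hstepii
      have hallu : ∀ z, M0 - B ≤ u z := by
        intro z
        have := hallv z
        rw [hM0def, hBdef]
        linarith
      have hallh : ∀ z, h z ≤ 0 := fun z => hcase z (hallu z)
      have endgame : ∀ xs, h xs ≤ -δ → Real.exp M0 ≤ E := by
        intro xs hxs
        have hups := hsumub xs
        have e0 : Real.exp (M0 - B) ≤ Real.exp (u xs) :=
          Real.exp_le_exp.mpr (by linarith [hallu xs])
        have hlow : μm * (δ * Real.exp (M0 - B)) - A * μM
            ≤ ∑ z, ω xs z * (u z - u xs) := by
          rw [hlapEq xs]
          have e1 : δ * Real.exp (M0 - B) ≤ (-(h xs)) * Real.exp (u xs) := by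
            nlinarith only [hxs, e0, Real.exp_pos (M0 - B), hδ0, Real.exp_pos (u xs)]
          have e2 := KWaux.mul_bound hμm (hxm xs) e1
            (le_trans (le_of_lt (mul_pos hδ0 (Real.exp_pos (M0 - B)))) e1)
          have e3 : -(A * μM) ≤ μ xs * c := by
            nlinarith only [neg_abs_le c, hcA, hxM xs, hμ xs, hμM, hA]
          have e4 : μ xs * (c - h xs * Real.exp (u xs))
              = μ xs * c + μ xs * ((-(h xs)) * Real.exp (u xs)) := by ring
          rw [e4]
          linarith
        have e4 : S * (M0 - u xs) ≤ S * B := by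
          have hx5 := hallu xs
          nlinarith only [hx5, hS0]
        have e5 : μm * (δ * Real.exp (M0 - B)) ≤ A * μM + S * B := by linarith
        refine le_trans ?_ hE5E
        rw [hE5def, le_div_iff₀ (mul_pos hμm hδ0)]
        have step := mul_le_mul_of_nonneg_left e5 (le_of_lt (Real.exp_pos B))
        have lhs : Real.exp B * (μm * (δ * Real.exp (M0 - B)))
            = Real.exp M0 * (μm * δ) := by rw [← he]; ring
        rw [lhs] at step
        linarith only [step]
      rcases lt_trichotomy c 0 with hclt | hc0 | hcgt
      · obtain ⟨xh, hxh⟩ := Finite.exists_min h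
        have hxh2 : h xh ≤ -A⁻¹ := le_trans (le_ciInf hxh) (h5 hclt).2
        refine endgame xh (le_trans hxh2 ?_)
        have := min_le_right (A⁻¹ / (Nr * μM)) A⁻¹
        rw [hδdef]
        linarith
      · have hint : ∑ x, h x * μ x ≤ -A⁻¹ := by
          have := h4 hc0
          unfold graphInt at this
          exact this
        obtain ⟨xh, hxh⟩ : ∃ xh, h xh * μ xh * Nr ≤ -A⁻¹ := by
          by_contra hcon
          push_neg at hcon
          have hlt : ∑ _z : V, (-A⁻¹ / Nr) < ∑ z, h z * μ z :=
            Finset.sum_lt_sum_of_nonempty univ_nonempty (fun z _ => by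
              rw [div_lt_iff₀ hNr0]; linarith [hcon z])
          rw [Finset.sum_const, nsmul_eq_mul, Finset.card_univ] at hlt
          have hNN : ((Fintype.card V : ℕ) : ℝ) = Nr := by rw [hNrdef, hNndef]
          rw [hNN] at hlt
          have hql : Nr * (-A⁻¹ / Nr) = -A⁻¹ := by rw [mul_comm]; exact div_mul_cancel₀ _ hNrne
          rw [hql] at hlt
          linarith [hint]
        have hxh0 : h xh < 0 := by
          by_contra hcon
          push_neg at hcon
          nlinarith only [hxh, hcon, mul_pos (hμ xh) hNr0, hinvA]
        have hxhd : h xh ≤ -δ := by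
          have hprod : 0 ≤ Nr * (-(h xh)) * (μM - μ xh) :=
            mul_nonneg (mul_nonneg (le_of_lt hNr0) (by linarith only [hxh0]))
              (by linarith only [hxM xh])
          have e1 : h xh * (Nr * μM) ≤ -A⁻¹ := by linarith only [hxh, hprod]
          have e2 : δ ≤ A⁻¹ / (Nr * μM) := by rw [hδdef]; exact min_le_left _ _
          have e3 : δ * (Nr * μM) ≤ A⁻¹ := by
            have q := mul_le_mul_of_nonneg_right e2 (le_of_lt hNrμM)
            have qq : A⁻¹ / (Nr * μM) * (Nr * μM) = A⁻¹ := div_mul_cancel₀ _ (ne_of_gt hNrμM)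
            rw [qq] at q
            exact q
          have e4 := mul_pos hNr0 hμM
          nlinarith only [e1, e3, e4]
        exact endgame xh hxhd
      · exfalso
        have hsn : ∑ x, h x * Real.exp (u x) * μ x ≤ 0 :=
          Finset.sum_nonpos fun x _ => by
            nlinarith only [hallh x, mul_pos (Real.exp_pos (u x)) (hμ x)]
        nlinarith only [hsum, hsn, hcgt, hμV, mul_pos hcgt hμV]
  -- lower bound on exp M0
  have hlowerE : E' ≤ Real.exp M0 := by
    have hcabs : |c| * μV ≤ A * Real.exp M0 * μV := by
      have habs : |∑ x, h x * Real.exp (u x) * μ x| ≤ A * Real.exp M0 * μV := by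
        refine le_trans (Finset.abs_sum_le_sum_abs _ _) ?_
        rw [hμVdef, Finset.mul_sum]
        refine Finset.sum_le_sum fun x _ => ?_
        rw [abs_mul, abs_mul, abs_of_pos (Real.exp_pos (u x)), abs_of_pos (hμ x)]
        have q1 := hhA x
        have q2 := hexpM0 x
        have q3 := hμ x
        have q4 := abs_nonneg (h x)
        have t1 : |h x| * Real.exp (u x) ≤ A * Real.exp M0 := by
          nlinarith only [q1, q2, q4, Real.exp_pos (u x), Real.exp_pos M0]
        have t2 := mul_le_mul_of_nonneg_right t1 (le_of_lt q3)
        linarith only [t2]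
      have : |c| * μV = |∑ x, h x * Real.exp (u x) * μ x| := by
        rw [hsum, abs_mul, abs_of_pos hμV]
      linarith
    have hfromc : ∀ hcnz : A⁻¹ ≤ |c|, E' ≤ Real.exp M0 := by
      intro hcnz
      have q1 : A⁻¹ ≤ A * Real.exp M0 := by nlinarith only [hcabs, hcnz, hμV]
      have q15 := mul_le_mul_of_nonneg_left q1 (le_of_lt hinvA)
      have q16 : A⁻¹ * (A * Real.exp M0) = Real.exp M0 := by rw [← mul_assoc, hAA, one_mul]
      have q2 : A⁻¹ * A⁻¹ ≤ Real.exp M0 := by linarith only [q15, q16]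
      exact le_trans (by rw [hE'def]; exact min_le_left _ _) q2
    rcases lt_trichotomy c 0 with hclt | hc0 | hcgt
    · exact hfromc (by rw [abs_of_neg hclt]; linarith [(h5 hclt).1])
    · -- c = 0 case
      have hint : ∑ x, h x * μ x ≤ -A⁻¹ := by
        have := h4 hc0
        unfold graphInt at this
        exact this
      have ha0 : (0:ℝ) < A * μM * Real.exp M0 := mul_pos (mul_pos hA hμM) (Real.exp_pos M0)
      have hstep0 : ∀ x, (fun _ => True) x → ∑ z, ω x z * (u z - u x)
          ≤ A * μM * Real.exp M0 := by
        intro x _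
        rw [hlapEq x, hc0]
        have q1 : -(h x) ≤ A := by linarith [neg_abs_le (h x), hhA x]
        have ht : 0 - h x * Real.exp (u x) ≤ A * Real.exp M0 := by
          nlinarith only [q1, hexpM0 x, Real.exp_pos (u x), Real.exp_pos M0, hA]
        have e4 := KWaux.mul_bound (hμ x) (hxM x) ht (le_of_lt (mul_pos hA (Real.exp_pos M0)))
        linarith only [e4]
      have hosc0 := coreK u x1 hx1 (A * μM * Real.exp M0) (le_of_lt ha0)
        (fun _ => True) (fun _ _ => trivial) hstep0 x0
      have hoscb : M0 - m0 ≤ A * μM * Real.exp M0 * K := by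
        rw [hM0def, hm0def]; linarith [hosc0]
      have key1 : -(A * (Real.exp M0 - Real.exp m0) * μV)
          ≤ Real.exp M0 * ∑ x, h x * μ x := by
        have hper : ∀ x ∈ univ, -(A * (Real.exp M0 - Real.exp m0) * μ x)
            ≤ h x * (Real.exp M0 - Real.exp (u x)) * μ x := by
          intro x _
          have q1 := hhA x
          have q2 := hexpM0 x
          have q3 : Real.exp m0 ≤ Real.exp (u x) := Real.exp_le_exp.mpr (hx1 x)
          have q4 := hμ x
          have t1 : 0 ≤ Real.exp M0 - Real.exp (u x) := by linarith
          have t2 : -A * (Real.exp M0 - Real.exp (u x))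
              ≤ h x * (Real.exp M0 - Real.exp (u x)) := by
            nlinarith only [neg_abs_le (h x), q1, t1]
          have t3 : -A * (Real.exp M0 - Real.exp m0)
              ≤ -A * (Real.exp M0 - Real.exp (u x)) := by nlinarith only [q3, hA]
          have t4 := mul_nonneg (show 0 ≤ h x * (Real.exp M0 - Real.exp (u x))
              + A * (Real.exp M0 - Real.exp m0) by linarith) (le_of_lt q4)
          linarith only [t4]
        have hsum2 := Finset.sum_le_sum hper
        have hl : ∑ x, -(A * (Real.exp M0 - Real.exp m0) * μ x)
            = -(A * (Real.exp M0 - Real.exp m0) * μV) := by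
          rw [Finset.sum_neg_distrib, hμVdef, ← Finset.mul_sum]
        have hr : ∑ x, h x * (Real.exp M0 - Real.exp (u x)) * μ x
            = Real.exp M0 * (∑ x, h x * μ x) - ∑ x, h x * Real.exp (u x) * μ x := by
          rw [Finset.mul_sum, ← Finset.sum_sub_distrib]
          exact Finset.sum_congr rfl fun x _ => by ring
        rw [hl, hr, hsum, hc0, zero_mul, sub_zero] at hsum2
        exact hsum2
      have key2 : A⁻¹ * Real.exp M0 ≤ A * μV * (Real.exp M0 - Real.exp m0) := by
        have q1 : Real.exp M0 * (∑ x, h x * μ x) ≤ Real.exp M0 * (-A⁻¹) :=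
          mul_le_mul_of_nonneg_left hint (le_of_lt (Real.exp_pos M0))
        linarith only [key1, q1]
      have key3 : Real.exp M0 - Real.exp m0 ≤ Real.exp M0 * (M0 - m0) := by
        have q1 := Real.add_one_le_exp (m0 - M0)
        have q2 : Real.exp m0 = Real.exp M0 * Real.exp (m0 - M0) := by
          rw [← Real.exp_add]; ring_nf
        nlinarith only [q1, q2, Real.exp_pos M0]
      have e0 := Real.exp_pos M0
      have s1 : Real.exp M0 - Real.exp m0
          ≤ Real.exp M0 * (A * μM * Real.exp M0 * K) := by
        nlinarith only [key3, hoscb, e0]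
      have s2 : A⁻¹ * Real.exp M0
          ≤ A * μV * (Real.exp M0 * (A * μM * Real.exp M0 * K)) := by
        nlinarith only [key2, s1, hμV, hA, mul_pos hA hμV]
      have key4 : A⁻¹ ≤ A * A * μV * μM * K * Real.exp M0 := by
        have t2 : A⁻¹ * Real.exp M0
            ≤ (A * A * μV * μM * K * Real.exp M0) * Real.exp M0 := by linarith only [s2]
        exact le_of_mul_le_mul_right t2 e0
      have : A⁻¹ / (A * A * μV * μM * K) ≤ Real.exp M0 := by
        rw [div_le_iff₀ (by linarith only [mul_pos (mul_pos (mul_pos (mul_pos hA hA) hμV) hμM) hK0] : (0:ℝ) < A * A * μV * μM * K)]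
        linarith only [key4]
      exact le_trans (by rw [hE'def]; exact min_le_right _ _) this
    · exact hfromc (by rw [abs_of_pos hcgt]; exact h3 hcgt)
  -- oscillation bound
  have hosc : M0 ≤ m0 + astar * K := by
    have hstep : ∀ x, (fun _ => True) x → ∑ z, ω x z * (u z - u x) ≤ astar := by
      intro x _
      rw [hlapEq x]
      have q1 : -(h x) ≤ A := by linarith [neg_abs_le (h x), hhA x]
      have e1 : -(h x) * Real.exp (u x) ≤ A * Real.exp M0 := by
        nlinarith only [q1, hexpM0 x, Real.exp_pos (u x), Real.exp_pos M0, hA]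
      have e2 : A * Real.exp M0 ≤ A * E := by nlinarith only [hupper, hA]
      have e3 : c ≤ A := le_trans (le_abs_self c) hcA
      have ht : c - h x * Real.exp (u x) ≤ A + A * E := by linarith only [e1, e2, e3]
      have e4 := KWaux.mul_bound (hμ x) (hxM x) ht (by linarith only [mul_pos hA hE0, hA] : (0:ℝ) ≤ A + A * E)
      rw [hastardef]
      linarith only [e4]
    have := coreK u x1 hx1 astar (le_of_lt hastar) (fun _ => True)
      (fun _ _ => trivial) hstep x0
    rw [hM0def, hm0def]
    linarith [this]
  -- finish
  intro x
  have hKa : 0 ≤ astar * K := le_of_lt (mul_pos hastar hK0)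
  have hup : u x ≤ Real.log E := by
    have := Real.log_le_log (Real.exp_pos M0) hupper
    rw [Real.log_exp] at this
    linarith [hx0 x]
  have hlo : Real.log E' - astar * K ≤ u x := by
    have := Real.log_le_log hE'0 hlowerE
    rw [Real.log_exp] at this
    linarith [hx1 x]
  rw [abs_le]
  constructor
  · have h1' : -|Real.log E'| ≤ Real.log E' := neg_abs_le _
    rw [hCdef]; linarith [abs_nonneg (Real.log E), abs_nonneg (Real.log E')]
  · have h2' : Real.log E ≤ |Real.log E| := le_abs_self _
    rw [hCdef]; linarith [abs_nonneg (Real.log E), abs_nonneg (Real.log E')]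
end
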